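/- arXiv:1907.08351 — 3 statements merged into one kernel-verified Lean document; each statement's English description precedes it below -/
import Mathlib

section
/- Let v, w ∈ M_0 with v < w. If u ∈ Γ_1(v, w), then J_{1,i}(u) → 0 as |i| → ∞. If moreover J_1(u) < ∞, then the double limit lim_{p → −∞, q → ∞} J_{1;p,q}(u) exists and equals J_1(u). -/
open scoped BigOperators

namespace FK

/-- The lattice `ℤ^n`. -/
abbrev Lat (n : ℕ) := Fin n → ℤ

/-- The `ℓ¹` norm on `ℤ^n`. -/
def latNorm {n : ℕ} (i : Lat n) : ℕ := ∑ k, (i k).natAbs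

/-- The ball `B_0^r = {k ∈ ℤ^n : ‖k‖ ≤ r}`. -/
abbrev B0 (n r : ℕ) := {k : Lat n // latNorm k ≤ r}

lemma B0.coord_mem {n r : ℕ} (k : B0 n r) (i : Fin n) :
    k.1 i ∈ Finset.Icc (-(r : ℤ)) (r : ℤ) := by
  have h1 : (k.1 i).natAbs ≤ latNorm k.1 :=
    Finset.single_le_sum (f := fun j => (k.1 j).natAbs) (fun _ _ => Nat.zero_le _)
      (Finset.mem_univ i)
  have h2 := k.2
  simp only [Finset.mem_Icc]
  omega

noncomputable instance B0.instFintype (n r : ℕ) : Fintype (B0 n r) :=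
  Fintype.ofInjective
    (fun k : B0 n r => (fun i => (⟨k.1 i, B0.coord_mem k i⟩ : (Finset.Icc (-(r : ℤ)) (r : ℤ)))))
    (fun a b h => Subtype.ext (funext fun i => congrArg Subtype.val (congrFun h i)))

/-- The center of the ball `B_0^r`. -/
def B0.zero (n r : ℕ) : B0 n r := ⟨0, by simp [latNorm]⟩

/-- The local potential `S_j(u) = s((i ↦ u(j+i))|_{B_0^r})`. -/
noncomputable def Spot {n r : ℕ} (s : (B0 n r → ℝ) → ℝ) (j : Lat n) (u : Lat n → ℝ) : ℝ :=
  s fun k => u (j + k.1)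

/-- The partial derivative of `s : ℝ^{B_0^r} → ℝ` with respect to the coordinate `k`. -/
noncomputable def pder {n r : ℕ} (s : (B0 n r → ℝ) → ℝ) (k : B0 n r) (x : B0 n r → ℝ) : ℝ :=
  deriv (fun t => s (Function.update x k t)) (x k)

/-- The partial derivative `∂_i S_j(u)` of `S_j` with respect to the variable `u(i)`. -/
noncomputable def pderS {n r : ℕ} (s : (B0 n r → ℝ) → ℝ) (i j : Lat n) (u : Lat n → ℝ) : ℝ :=
  deriv (fun t => Spot s j (Function.update u i t)) (u i)

/-- Conditions (S1)–(S3) on the potential, together with `C²` smoothness. -/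
structure IsPotential (n r : ℕ) (s : (B0 n r → ℝ) → ℝ) : Prop where
  smooth : ContDiff ℝ 2 s
  periodic : ∀ x : B0 n r → ℝ, s (fun k => x k + 1) = s x
  bddBelow : ∃ M : ℝ, ∀ x, M ≤ s x
  coercive : ∀ k j : B0 n r, latNorm (k.1 - j.1) = 1 →
    ∀ C : ℝ, ∃ R : ℝ, ∀ x : B0 n r → ℝ, R ≤ |x k - x j| → C ≤ s x
  cross_nonpos : ∀ k j : B0 n r, k ≠ j → ∀ x, pder (pder s j) k x ≤ 0
  cross_neg : ∀ j : B0 n r, latNorm j.1 = 1 → ∀ x, pder (pder s j) (B0.zero n r) x < 0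

/-- `u` satisfies the Euler–Lagrange equation (EL) at the site `i`. -/
def SolvesAt {n r : ℕ} (s : (B0 n r → ℝ) → ℝ) (u : Lat n → ℝ) (i : Lat n) : Prop :=
  ∑ k : B0 n r, pderS s i (i + k.1) u = 0

/-- `u` is a solution of the Euler–Lagrange equation (EL). -/
def IsSolution {n r : ℕ} (s : (B0 n r → ℝ) → ℝ) (u : Lat n → ℝ) : Prop :=
  ∀ i : Lat n, SolvesAt s u i

/-- The `m`-th standard basis vector of `ℤ^n` (`0`-indexed: `latE 0 = e_1`). -/
def latE {n : ℕ} (m : ℕ) : Lat n := fun k => if (k : ℕ) = m then 1 else 0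

/-- The lattice point `T_i = (i,0,…,0)`. -/
def latT {n : ℕ} (i : ℤ) : Lat n := fun k => if (k : ℕ) = 0 then i else 0

/-- The first coordinate index of `Fin (n+2)`. -/
def coord0 (n : ℕ) : Fin (n + 2) := ⟨0, by omega⟩

/-- The second coordinate index of `Fin (n+2)`. -/
def coord1 (n : ℕ) : Fin (n + 2) := ⟨1, by omega⟩

/-- Configurations of period one in every coordinate direction (the set `Γ_0`). -/
def fullyPeriodic {n : ℕ} (u : Lat n → ℝ) : Prop :=
  ∀ i : Lat n, ∀ k : Fin n, u (i + latE (k : ℕ)) = u i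

noncomputable def J0 {n r : ℕ} (s : (B0 n r → ℝ) → ℝ) (u : Lat n → ℝ) : ℝ := Spot s 0 u

noncomputable def c0 {n r : ℕ} (s : (B0 n r → ℝ) → ℝ) : ℝ :=
  sInf (J0 s '' {u | fullyPeriodic u})

def M0 {n r : ℕ} (s : (B0 n r → ℝ) → ℝ) : Set (Lat n → ℝ) :=
  {u | fullyPeriodic u ∧ J0 s u = c0 s}

/-- `v`, `w` form an adjacent (gap) pair of the set `A`:  `v < w` pointwise, both belong to
`A`, and no element of `A` lies strictly between them. -/
def Adjacent {n : ℕ} (A : Set (Lat n → ℝ)) (v w : Lat n → ℝ) : Prop :=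
  v ∈ A ∧ w ∈ A ∧ (∀ i, v i < w i) ∧ ∀ u ∈ A, v ≤ u → u ≤ w → u = v ∨ u = w

/-- Configurations of period one in the coordinate directions `2,…,n`. -/
def tailPeriodic {n : ℕ} (u : Lat n → ℝ) : Prop :=
  ∀ i : Lat n, ∀ k : Fin n, (k : ℕ) ≠ 0 → u (i + latE (k : ℕ)) = u i

/-- The set `Γ̂_1(v,w)`. -/
def Gamma1hat {n : ℕ} (v w : Lat n → ℝ) : Set (Lat n → ℝ) :=
  {u | tailPeriodic u ∧ v ≤ u ∧ u ≤ w}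

noncomputable def J1i {n r : ℕ} (s : (B0 n r → ℝ) → ℝ) (i : ℤ) (u : Lat n → ℝ) : ℝ :=
  Spot s (latT i) u - c0 s

noncomputable def J1pq {n r : ℕ} (s : (B0 n r → ℝ) → ℝ) (p q : ℤ) (u : Lat n → ℝ) : ℝ :=
  ∑ i ∈ Finset.Icc p q, J1i s i u

/-- The renormalized functional `J_1 = liminf_{p→-∞, q→∞} J_{1;p,q}`, as an extended real. -/
noncomputable def J1 {n r : ℕ} (s : (B0 n r → ℝ) → ℝ) (u : Lat n → ℝ) : EReal :=
  Filter.liminf (fun pq : ℤ × ℤ => ((J1pq s pq.1 pq.2 u : ℝ) : EReal))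
    (Filter.atBot ×ˢ Filter.atTop)

/-- The filter `|i| → ∞` on `ℤ`. -/
noncomputable def absAtTop : Filter ℤ := Filter.comap (fun i : ℤ => |i|) Filter.atTop

/-- The set `Γ_1(v,w)` of configurations heteroclinic in `i_1` from `v` to `w`. -/
def Gamma1 {n : ℕ} (v w : Lat n → ℝ) : Set (Lat n → ℝ) :=
  {u | u ∈ Gamma1hat v w ∧
    Filter.Tendsto (fun i : ℤ => |u (latT i) - v (latT i)|) Filter.atBot (nhds 0) ∧
    Filter.Tendsto (fun i : ℤ => |u (latT i) - w (latT i)|) Filter.atTop (nhds 0)}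

noncomputable def c1 {n r : ℕ} (s : (B0 n r → ℝ) → ℝ) (v w : Lat n → ℝ) : EReal :=
  sInf (J1 s '' Gamma1 v w)

def M1 {n r : ℕ} (s : (B0 n r → ℝ) → ℝ) (v w : Lat n → ℝ) : Set (Lat n → ℝ) :=
  {u ∈ Gamma1 v w | J1 s u = c1 s v w}

/-- The set `Γ_1(w,v)` of configurations heteroclinic in `i_1` from `w` down to `v`. -/
def Gamma1rev {n : ℕ} (v w : Lat n → ℝ) : Set (Lat n → ℝ) :=
  {u | u ∈ Gamma1hat v w ∧
    Filter.Tendsto (fun i : ℤ => |u (latT i) - w (latT i)|) Filter.atBot (nhds 0) ∧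
    Filter.Tendsto (fun i : ℤ => |u (latT i) - v (latT i)|) Filter.atTop (nhds 0)}

noncomputable def c1rev {n r : ℕ} (s : (B0 n r → ℝ) → ℝ) (v w : Lat n → ℝ) : EReal :=
  sInf (J1 s '' Gamma1rev v w)

def M1rev {n r : ℕ} (s : (B0 n r → ℝ) → ℝ) (v w : Lat n → ℝ) : Set (Lat n → ℝ) :=
  {u ∈ Gamma1rev v w | J1 s u = c1rev s v w}

/-- The set `Γ_1(v)`, for `v ∈ M_0`. -/
def Gamma1v {n : ℕ} (v : Lat n → ℝ) : Set (Lat n → ℝ) :=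
  {u | u ∈ Gamma1hat (fun i => v i - 1) (fun i => v i + 1) ∧
    Filter.Tendsto (fun i : ℤ => |u (latT i) - v (latT i)|) absAtTop (nhds 0)}

noncomputable def c1v {n r : ℕ} (s : (B0 n r → ℝ) → ℝ) (v : Lat n → ℝ) : EReal :=
  sInf (J1 s '' Gamma1v v)

def M1v {n r : ℕ} (s : (B0 n r → ℝ) → ℝ) (v : Lat n → ℝ) : Set (Lat n → ℝ) :=
  {u ∈ Gamma1v v | J1 s u = c1v s v}

/-! ### Periodic configurations with general periods (`Γ_0(l)` etc.) -/

def GammaPer {n : ℕ} (l : Fin n → ℕ) : Set (Lat n → ℝ) :=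
  {u | ∀ i : Lat n, ∀ k : Fin n, u (i + (l k : ℤ) • latE (k : ℕ)) = u i}

noncomputable def J0l {n r : ℕ} (s : (B0 n r → ℝ) → ℝ) (l : Fin n → ℕ) (u : Lat n → ℝ) : ℝ :=
  ∑ i ∈ Fintype.piFinset (fun k => Finset.Ico (0 : ℤ) (l k)), Spot s i u

noncomputable def c0l {n r : ℕ} (s : (B0 n r → ℝ) → ℝ) (l : Fin n → ℕ) : ℝ :=
  sInf (J0l s l '' GammaPer l)

def M0l {n r : ℕ} (s : (B0 n r → ℝ) → ℝ) (l : Fin n → ℕ) : Set (Lat n → ℝ) :=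
  {u ∈ GammaPer l | J0l s l u = c0l s l}

/-! ### The `l`-periodic analogues of `Γ_1` (for Proposition 3.20) -/

/-- The finite slice `{j | j_1 = i, 0 ≤ j_k < l_k (k ≥ 2)}`. -/
noncomputable def sliceBox {n : ℕ} (l : Fin n → ℕ) (i : ℤ) : Finset (Lat n) :=
  Fintype.piFinset fun k => if (k : ℕ) = 0 then {i} else Finset.Ico (0 : ℤ) (l k)

def tailPeriodicL {n : ℕ} (l : Fin n → ℕ) (u : Lat n → ℝ) : Prop :=
  ∀ i : Lat n, ∀ k : Fin n, (k : ℕ) ≠ 0 → u (i + (l k : ℤ) • latE (k : ℕ)) = u i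

/-- `∏_{k=2}^{n} l_k`. -/
noncomputable def tailProd {n : ℕ} (l : Fin n → ℕ) : ℝ :=
  ∏ k ∈ Finset.univ.filter (fun k : Fin n => (k : ℕ) ≠ 0), (l k : ℝ)

noncomputable def J1il {n r : ℕ} (s : (B0 n r → ℝ) → ℝ) (l : Fin n → ℕ) (i : ℤ)
    (u : Lat n → ℝ) : ℝ :=
  (∑ j ∈ sliceBox l i, Spot s j u) - tailProd l * c0 s

noncomputable def J1pql {n r : ℕ} (s : (B0 n r → ℝ) → ℝ) (l : Fin n → ℕ) (p q : ℤ)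
    (u : Lat n → ℝ) : ℝ :=
  ∑ i ∈ Finset.Icc p q, J1il s l i u

noncomputable def J1l {n r : ℕ} (s : (B0 n r → ℝ) → ℝ) (l : Fin n → ℕ) (u : Lat n → ℝ) :
    EReal :=
  Filter.liminf (fun pq : ℤ × ℤ => ((J1pql s l pq.1 pq.2 u : ℝ) : EReal))
    (Filter.atBot ×ˢ Filter.atTop)

def Gamma1hatL {n : ℕ} (l : Fin n → ℕ) (v w : Lat n → ℝ) : Set (Lat n → ℝ) :=
  {u | tailPeriodicL l u ∧ v ≤ u ∧ u ≤ w}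

def Gamma1L {n : ℕ} (l : Fin n → ℕ) (v w : Lat n → ℝ) : Set (Lat n → ℝ) :=
  {u | u ∈ Gamma1hatL l v w ∧
    Filter.Tendsto (fun i : ℤ => ∑ j ∈ sliceBox l i, |u j - v j|) Filter.atBot (nhds 0) ∧
    Filter.Tendsto (fun i : ℤ => ∑ j ∈ sliceBox l i, |u j - w j|) Filter.atTop (nhds 0)}

noncomputable def c1L {n r : ℕ} (s : (B0 n r → ℝ) → ℝ) (l : Fin n → ℕ) (v w : Lat n → ℝ) :
    EReal :=
  sInf (J1l s l '' Gamma1L l v w)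

def M1L {n r : ℕ} (s : (B0 n r → ℝ) → ℝ) (l : Fin n → ℕ) (v w : Lat n → ℝ) :
    Set (Lat n → ℝ) :=
  {u ∈ Gamma1L l v w | J1l s l u = c1L s l v w}

/-! ### Minimal and Birkhoff configurations -/

/-- `u` is a (global) minimizer for the potentials `S_j`. -/
def Minimal {n r : ℕ} (s : (B0 n r → ℝ) → ℝ) (u : Lat n → ℝ) : Prop :=
  ∀ B : Finset (Lat n), ∀ v : Lat n → ℝ,
    (∀ i : Lat n, v i ≠ 0 → i ∈ B ∧ ∀ k : Lat n, latNorm (k - i) ≤ r → k ∈ B) →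
    ∑ j ∈ B, Spot s j u ≤ ∑ j ∈ B, Spot s j (u + v)

/-- `u` is Birkhoff: all its integer translates are comparable with `u`. -/
def Birkhoff {n : ℕ} (u : Lat n → ℝ) : Prop :=
  ∀ k : Fin n, ∀ j : ℤ,
    (∀ i, u (i + j • latE (k : ℕ)) < u i) ∨ (∀ i, u (i + j • latE (k : ℕ)) = u i) ∨
      (∀ i, u i < u (i + j • latE (k : ℕ)))

/-! ### The second-order objects (`Γ̂_2`, `J_2`, `M_2`) -/

/-- Configurations of period one in the coordinate directions `3,…,n`. -/
def tailPeriodic2 {n : ℕ} (u : Lat n → ℝ) : Prop :=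
  ∀ i : Lat n, ∀ k : Fin n, 2 ≤ (k : ℕ) → u (i + latE (k : ℕ)) = u i

/-- The set `Γ̂_2(v,w)`. -/
def Gamma2hat {n : ℕ} (v w : Lat n → ℝ) : Set (Lat n → ℝ) :=
  {u | tailPeriodic2 u ∧ v ≤ u ∧ u ≤ w}

/-- The row `E_i = {j ∈ ℤ^n : j_2 = i, j_3 = ⋯ = j_n = 0}`. -/
def Erow (n : ℕ) (i : ℤ) : Set (Lat n) :=
  {j | (∀ k : Fin n, (k : ℕ) = 1 → j k = i) ∧ ∀ k : Fin n, 2 ≤ (k : ℕ) → j k = 0}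

/-- `J_{2,i}(u) = J_1(τ²_{-i} u) - c_1 = ∑_{j ∈ E_0} [S_j(τ²_{-i}u) - S_j(v)]`, where `v` is the
base configuration. -/
noncomputable def J2i {n r : ℕ} (s : (B0 n r → ℝ) → ℝ) (v : Lat n → ℝ) (i : ℤ)
    (u : Lat n → ℝ) : ℝ :=
  ∑' j : Erow n 0, (Spot s j.1 (fun x => u (x + i • latE 1)) - Spot s j.1 v)

noncomputable def J2pq {n r : ℕ} (s : (B0 n r → ℝ) → ℝ) (v : Lat n → ℝ) (p q : ℤ)
    (u : Lat n → ℝ) : ℝ :=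
  ∑ i ∈ Finset.Icc p q, J2i s v i u

/-- The renormalized functional `J_2`, as an extended real. -/
noncomputable def J2 {n r : ℕ} (s : (B0 n r → ℝ) → ℝ) (v : Lat n → ℝ) (u : Lat n → ℝ) :
    EReal :=
  Filter.liminf (fun pq : ℤ × ℤ => ((J2pq s v pq.1 pq.2 u : ℝ) : EReal))
    (Filter.atBot ×ˢ Filter.atTop)

/-- The set `Γ_2(v,w)` of configurations heteroclinic in `i_2` from `v` to `w`. -/
def Gamma2 {n : ℕ} (v w : Lat n → ℝ) : Set (Lat n → ℝ) :=
  {u | u ∈ Gamma2hat v w ∧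
    Filter.Tendsto (fun i : ℤ => ∑' j : Erow n i, |u j.1 - v j.1|) Filter.atBot (nhds 0) ∧
    Filter.Tendsto (fun i : ℤ => ∑' j : Erow n i, |u j.1 - w j.1|) Filter.atTop (nhds 0)}

noncomputable def c2 {n r : ℕ} (s : (B0 n r → ℝ) → ℝ) (v w : Lat n → ℝ) : EReal :=
  sInf (J2 s v '' Gamma2 v w)

def M2 {n r : ℕ} (s : (B0 n r → ℝ) → ℝ) (v w : Lat n → ℝ) : Set (Lat n → ℝ) :=
  {u ∈ Gamma2 v w | J2 s v u = c2 s v w}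


/-! ### Auxiliary lemmas for statement 5 -/

open Filter

section Translate

variable {N : ℕ}

lemma translate_invariant (u : Lat N → ℝ) (e : Lat N) (h : ∀ i, u (i + e) = u i) :
    ∀ (m : ℤ) (i : Lat N), u (i + m • e) = u i := by
  intro m
  induction m using Int.induction_on with
  | zero => intro i; simp
  | succ k ih =>
    intro i
    have h1 : i + ((k : ℤ) + 1) • e = (i + e) + (k : ℤ) • e := by
      rw [add_smul, one_smul]; abel
    rw [h1, ih, h]
  | pred k ih =>
    intro i
    have h1 : (i + (-(k : ℤ) - 1) • e) + e = i + (-(k : ℤ)) • e := by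
      rw [sub_smul, one_smul]; abel
    have h2 := h (i + (-(k : ℤ) - 1) • e)
    rw [h1] at h2
    rw [← h2, ih]

end Translate

section Reduce

variable {m : ℕ}

lemma latT_apply_zero (i : ℤ) : latT (n := m + 1) i 0 = i := by
  simp [latT]

lemma tail_reduce {u : Lat (m + 1) → ℝ} (hu : tailPeriodic u) (j : Lat (m + 1)) :
    u j = u (latT (j 0)) := by
  suffices H : ∀ D : Finset (Fin (m + 1)), ∀ j : Lat (m + 1),
      (∀ k, k ∉ D → (k : ℕ) ≠ 0 → j k = 0) → u j = u (latT (j 0)) by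
    exact H Finset.univ j (fun k hk _ => absurd (Finset.mem_univ k) hk)
  intro D
  induction D using Finset.induction_on with
  | empty =>
    intro j hj
    have : j = latT (j 0) := by
      funext k
      by_cases hk : (k : ℕ) = 0
      · have : k = 0 := by
          apply Fin.ext; simpa using hk
        rw [this]; simp [latT]
      · simp only [latT, hk, if_false]
        exact hj k (by simp) hk
    rw [← this]
  | @insert a D ha IH =>
    intro j hj
    by_cases h0 : (a : ℕ) = 0
    · refine IH j (fun k hk hk0 => ?_)
      refine hj k ?_ hk0
      simp only [Finset.mem_insert, not_or]
      exact ⟨fun h => hk0 (h ▸ h0), hk⟩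
    · set j' : Lat (m + 1) := fun k => if k = a then 0 else j k with hj'
      have hstep : u j = u j' := by
        have hrep : j = j' + (j a) • latE (a : ℕ) := by
          funext k
          by_cases hk : k = a
          · subst hk
            simp [hj', latE]
          · have hk' : (k : ℕ) ≠ (a : ℕ) := fun h => hk (Fin.ext h)
            simp [hj', latE, hk, hk']
        rw [hrep]
        exact translate_invariant u _ (fun i => hu i a h0) _ _
      rw [hstep]
      have h0' : j' 0 = j 0 := by
        have : (0 : Fin (m + 1)) ≠ a := fun h => h0 (by rw [← h]; simp)
        simp [hj', this]
      rw [← h0']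
      refine IH j' (fun k hk hk0 => ?_)
      by_cases hk' : k = a
      · simp [hj', hk']
      · simp only [hj', hk', if_false]
        refine hj k ?_ hk0
        simp only [Finset.mem_insert, not_or]
        exact ⟨hk', hk⟩

lemma fully_const {v : Lat (m + 1) → ℝ} (hv : fullyPeriodic v) (j : Lat (m + 1)) :
    v j = v 0 := by
  have htail : tailPeriodic v := fun i k _ => hv i k
  rw [tail_reduce htail j]
  have h1 : latT (n := m + 1) (j 0) = 0 + (j 0) • latE 0 := by
    funext k
    by_cases hk : (k : ℕ) = 0
    · simp [latT, latE, hk]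
    · simp [latT, latE, hk]
  rw [h1]
  exact translate_invariant v _ (fun i => hv i 0) _ _

lemma spot_reduce {R : ℕ} {s : (B0 (m + 1) R → ℝ) → ℝ} {u : Lat (m + 1) → ℝ}
    (hu : tailPeriodic u) (i : ℤ) :
    Spot s (latT i) u = s (fun k => u (latT (i + k.1 0))) := by
  unfold Spot
  congr 1
  funext k
  rw [tail_reduce hu (latT i + k.1)]
  have h1 : (latT (n := m + 1) i + k.1) 0 = i + k.1 0 := by
    simp [Pi.add_apply, latT_apply_zero]
  rw [h1]

lemma c0_le {R : ℕ} {s : (B0 (m + 1) R → ℝ) → ℝ} (hb : ∃ M : ℝ, ∀ x, M ≤ s x) (c : ℝ) :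
    c0 s ≤ s (fun _ => c) := by
  apply csInf_le
  · obtain ⟨M, hM⟩ := hb
    refine ⟨M, ?_⟩
    rintro x ⟨y, -, rfl⟩
    exact hM _
  · refine ⟨fun _ => c, fun i k => rfl, rfl⟩

lemma c0_eq_of_mem {R : ℕ} {s : (B0 (m + 1) R → ℝ) → ℝ} {v : Lat (m + 1) → ℝ}
    (hv : v ∈ M0 s) : s (fun _ => v 0) = c0 s := by
  have h1 : J0 s v = c0 s := hv.2
  rw [← h1]
  unfold J0 Spot
  congr 1
  funext k
  exact (fully_const hv.1 _).symm

end Reduce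
section Calculus

variable {n r : ℕ} {s : (B0 n r → ℝ) → ℝ}

private lemma update_eq_add_smul (x : B0 n r → ℝ) (k : B0 n r) (t : ℝ) :
    Function.update x k t = x + (t - x k) • (Pi.single k 1 : B0 n r → ℝ) := by
  funext j
  by_cases h : j = k
  · subst h; simp
  · simp [Function.update_apply, h, Pi.single_apply]

lemma hasDerivAt_updateS (hd : Differentiable ℝ s) (x : B0 n r → ℝ) (k : B0 n r) (t₀ : ℝ) :
    HasDerivAt (fun t => s (Function.update x k t))
      (fderiv ℝ s (Function.update x k t₀) (Pi.single k 1)) t₀ := by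
  have h1 : ∀ t, Function.update x k t =
      x + (t - x k) • (Pi.single k 1 : B0 n r → ℝ) := update_eq_add_smul x k
  have hline : HasDerivAt (fun t : ℝ => x + (t - x k) • (Pi.single k 1 : B0 n r → ℝ))
      (Pi.single k 1) t₀ := by
    simpa using (((hasDerivAt_id t₀).sub_const (x k)).smul_const
      (Pi.single k 1 : B0 n r → ℝ)).const_add x
  have hfd : HasFDerivAt s (fderiv ℝ s (Function.update x k t₀))
      (x + (t₀ - x k) • (Pi.single k 1 : B0 n r → ℝ)) := by
    rw [← h1]; exact (hd _).hasFDerivAt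
  have hcomp := hfd.comp_hasDerivAt t₀ hline
  have hfun : (fun t => s (Function.update x k t)) =
      fun t => s (x + (t - x k) • (Pi.single k 1 : B0 n r → ℝ)) := by
    funext t; rw [h1]
  rw [hfun]
  exact hcomp

lemma pder_eq_fderiv (hd : Differentiable ℝ s) (k : B0 n r) (x : B0 n r → ℝ) :
    pder s k x = fderiv ℝ s x (Pi.single k 1) := by
  have h := hasDerivAt_updateS hd x k (x k)
  rw [Function.update_eq_self] at h
  exact h.deriv

lemma contDiff_pder (hs2 : ContDiff ℝ 2 s) (j : B0 n r) : ContDiff ℝ 1 (pder s j) := by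
  have h1 : ContDiff ℝ 1 (fderiv ℝ s) := hs2.fderiv_right (by norm_num)
  have h2 := (ContinuousLinearMap.apply ℝ ℝ (Pi.single j (1 : ℝ))).contDiff.comp h1
  have h3 : pder s j = fun x => (fderiv ℝ s x) (Pi.single j (1 : ℝ)) :=
    funext fun x => pder_eq_fderiv (hs2.differentiable (by norm_num)) j x
  rw [h3]
  exact h2

lemma deriv_pder_update (j k : B0 n r) (x : B0 n r → ℝ) (t₀ : ℝ) :
    deriv (fun t => pder s j (Function.update x k t)) t₀ =
      pder (pder s j) k (Function.update x k t₀) := by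
  have h1 : pder (pder s j) k (Function.update x k t₀) =
      deriv (fun t => pder s j (Function.update (Function.update x k t₀) k t))
        (Function.update x k t₀ k) := rfl
  rw [h1, Function.update_self]
  congr 1
  funext t
  rw [Function.update_idem]

lemma diff_update (hd : Differentiable ℝ s) (x : B0 n r → ℝ) (k : B0 n r) :
    Differentiable ℝ (fun t => s (Function.update x k t)) :=
  fun t => (hasDerivAt_updateS hd x k t).differentiableAt

lemma antitone_pder (hs2 : ContDiff ℝ 2 s)
    (hcross : ∀ k j : B0 n r, k ≠ j → ∀ x, pder (pder s j) k x ≤ 0)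
    (j k : B0 n r) (hkj : k ≠ j) (x : B0 n r → ℝ) :
    Antitone fun t => pder s j (Function.update x k t) := by
  apply antitone_of_deriv_nonpos
  · have hupd : Differentiable ℝ (fun t : ℝ => Function.update x k t) := by
      have : (fun t : ℝ => Function.update x k t) =
          fun t => x + (t - x k) • (Pi.single k 1 : B0 n r → ℝ) :=
        funext (update_eq_add_smul x k)
      rw [this]
      exact (((differentiable_id).sub_const _).smul_const _).const_add _
    exact ((contDiff_pder hs2 j).differentiable one_ne_zero).comp hupd
  · intro t
    rw [deriv_pder_update]
    exact hcross k j hkj _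

lemma pder_le_of_le (hs2 : ContDiff ℝ 2 s)
    (hcross : ∀ k j : B0 n r, k ≠ j → ∀ x, pder (pder s j) k x ≤ 0)
    (k : B0 n r) :
    ∀ x y : B0 n r → ℝ, x ≤ y → x k = y k → pder s k y ≤ pder s k x := by
  suffices H : ∀ D : Finset (B0 n r), ∀ x y : B0 n r → ℝ, x ≤ y → x k = y k →
      (∀ m ∉ D, x m = y m) → pder s k y ≤ pder s k x by
    intro x y h1 h2
    exact H Finset.univ x y h1 h2 (fun m hm => absurd (Finset.mem_univ m) hm)
  intro D
  induction D using Finset.induction_on with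
  | empty =>
    intro x y h1 h2 h3
    have : x = y := funext fun m => h3 m (by simp)
    rw [this]
  | @insert a D ha IH =>
    intro x y h1 h2 h3
    by_cases hxya : x a = y a
    · refine IH x y h1 h2 (fun m hm => ?_)
      by_cases hma : m = a
      · rw [hma]; exact hxya
      · exact h3 m (by simp [Finset.mem_insert, hma, hm])
    · have hak : a ≠ k := fun h => hxya (h ▸ h2)
      have hstep : pder s k y ≤ pder s k (Function.update y a (x a)) := by
        have hanti := antitone_pder hs2 hcross k a hak y
        have h5 : pder s k (Function.update y a (y a)) ≤
            pder s k (Function.update y a (x a)) := hanti (h1 a)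
        rwa [Function.update_eq_self] at h5
      refine le_trans hstep (IH x (Function.update y a (x a)) ?_ ?_ ?_)
      · intro m
        by_cases hma : m = a
        · subst hma; rw [Function.update_self]
        · rw [Function.update_of_ne hma]; exact h1 m
      · rw [Function.update_of_ne hak.symm]; exact h2
      · intro m hm
        by_cases hma : m = a
        · subst hma; rw [Function.update_self]
        · rw [Function.update_of_ne hma]
          exact h3 m (by simp [Finset.mem_insert, hma, hm])

lemma submod_step (hs2 : ContDiff ℝ 2 s)
    (hcross : ∀ k j : B0 n r, k ≠ j → ∀ x, pder (pder s j) k x ≤ 0)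
    (k : B0 n r) (zlo zhi : B0 n r → ℝ) (hle : zlo ≤ zhi) (hk : zlo k = zhi k) :
    Antitone fun t => s (Function.update zhi k t) - s (Function.update zlo k t) := by
  have hd : Differentiable ℝ s := hs2.differentiable (by norm_num)
  apply antitone_of_deriv_nonpos
  · exact (diff_update hd zhi k).sub (diff_update hd zlo k)
  · intro t
    rw [deriv_fun_sub ((hasDerivAt_updateS hd zhi k t).differentiableAt)
      ((hasDerivAt_updateS hd zlo k t).differentiableAt)]
    have dz : ∀ z : B0 n r → ℝ, deriv (fun t' => s (Function.update z k t')) t =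
        pder s k (Function.update z k t) := by
      intro z
      rw [(hasDerivAt_updateS hd z k t).deriv, pder_eq_fderiv hd]
    rw [dz, dz]
    have hle' : Function.update zlo k t ≤ Function.update zhi k t := by
      intro m
      by_cases hm : m = k
      · subst hm; simp
      · rw [Function.update_of_ne hm, Function.update_of_ne hm]; exact hle m
    have := pder_le_of_le hs2 hcross k (Function.update zlo k t)
      (Function.update zhi k t) hle' (by simp)
    linarith

lemma submodular (hs2 : ContDiff ℝ 2 s)
    (hcross : ∀ k j : B0 n r, k ≠ j → ∀ x, pder (pder s j) k x ≤ 0)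
    (x y : B0 n r → ℝ) :
    s (x ⊓ y) + s (x ⊔ y) ≤ s x + s y := by
  set d : B0 n r → ℝ := x - x ⊓ y with hd
  have hd0 : ∀ m, 0 ≤ d m := by
    intro m
    simp only [hd, Pi.sub_apply, Pi.inf_apply, sub_nonneg]
    exact inf_le_left
  have hxy : x = (x ⊓ y) + d := by
    funext m; simp [hd]
  have hsy : x ⊔ y = y + d := by
    funext m
    simp only [Pi.sup_apply, Pi.add_apply, hd, Pi.sub_apply, Pi.inf_apply]
    rcases le_total (x m) (y m) with h | h
    · rw [max_eq_right h, min_eq_left h]; ring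
    · rw [max_eq_left h, min_eq_right h]; ring
  suffices h : s (y + d) - s y ≤ s ((x ⊓ y) + d) - s (x ⊓ y) by
    rw [hsy]
    nth_rewrite 2 [hxy]
    linarith
  have hmain : ∀ D : Finset (B0 n r), ∀ z z' : B0 n r → ℝ, z ≤ z' →
      (∀ m, d m ≠ 0 → z m = z' m) → (∀ m ∉ D, z m = z' m) →
      s (z' + d) - s z' ≤ s (z + d) - s z := by
    intro D
    induction D using Finset.induction_on with
    | empty =>
      intro z z' h1 h2 h3
      have : z = z' := funext fun m => h3 m (by simp)
      rw [this]
    | @insert a D ha IH =>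
      intro z z' h1 h2 h3
      by_cases hza : z a = z' a
      · refine IH z z' h1 h2 (fun m hm => ?_)
        by_cases hma : m = a
        · rw [hma]; exact hza
        · exact h3 m (by simp [Finset.mem_insert, hma, hm])
      · have hda : d a = 0 := by
          by_contra hcon
          exact hza (h2 a hcon)
        set z'' := Function.update z' a (z a) with hz''
        have hupd1 : Function.update (z' + d) a (z' a) = z' + d := by
          apply Function.update_eq_self_iff.mpr
          simp [hda]
        have hupd2 : Function.update (z' + d) a (z a) = z'' + d := by
          funext m
          by_cases hm : m = a
          · subst hm; simp [hz'', hda]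
          · simp [Function.update_of_ne hm, hz'']
        have key : s (z' + d) - s z' ≤ s (z'' + d) - s z'' := by
          have hanti := submod_step hs2 hcross a z' (z' + d)
            (fun m => by simp [hd0 m]) (by simp [hda])
          have h4 : s (Function.update (z' + d) a (z' a)) -
                s (Function.update z' a (z' a)) ≤
              s (Function.update (z' + d) a (z a)) -
                s (Function.update z' a (z a)) := hanti (h1 a)
          rwa [hupd1, hupd2, Function.update_eq_self] at h4
        refine le_trans key (IH z z'' ?_ ?_ ?_)
        · intro m
          by_cases hm : m = a
          · subst hm; rw [hz'', Function.update_self]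
          · rw [hz'', Function.update_of_ne hm]; exact h1 m
        · intro m hdm
          by_cases hm : m = a
          · subst hm; rw [hz'', Function.update_self]
          · rw [hz'', Function.update_of_ne hm]; exact h2 m hdm
        · intro m hm
          by_cases hma : m = a
          · subst hma; rw [hz'', Function.update_self]
          · rw [hz'', Function.update_of_ne hma]
            exact h3 m (by simp [Finset.mem_insert, hma, hm])
  refine hmain Finset.univ (x ⊓ y) y inf_le_right (fun m hdm => ?_)
    (fun m hm => absurd (Finset.mem_univ m) hm)
  simp only [Pi.inf_apply]
  have : ¬ (x m ≤ y m) := by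
    intro hc
    apply hdm
    simp only [hd, Pi.sub_apply, Pi.inf_apply, min_eq_left hc, sub_self]
  rw [min_eq_right (le_of_not_ge this)]

end Calculus
section Sorting

/-- Iterated pairwise `⊔` tops extracted while computing the infimum of a list. -/
def tops : (ℤ → ℝ) → List (ℤ → ℝ) → List (ℤ → ℝ)
  | _, [] => []
  | a, b :: t => (a ⊔ b) :: tops (a ⊓ b) t

/-- Iterated pairwise `⊓` of a list. -/
def botf : (ℤ → ℝ) → List (ℤ → ℝ) → (ℤ → ℝ)
  | a, [] => a
  | a, b :: t => botf (a ⊓ b) t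

lemma tops_length : ∀ (t : List (ℤ → ℝ)) (a : ℤ → ℝ), (tops a t).length = t.length := by
  intro t
  induction t with
  | nil => intro a; rfl
  | cons b t IH => intro a; simp [tops, IH]

lemma bot_tops_energy (E : (ℤ → ℝ) → ℝ)
    (hsub : ∀ X Y : ℤ → ℝ, E (X ⊓ Y) + E (X ⊔ Y) ≤ E X + E Y) :
    ∀ (t : List (ℤ → ℝ)) (a : ℤ → ℝ),
      E (botf a t) + ((tops a t).map E).sum ≤ E a + (t.map E).sum := by
  intro t
  induction t with
  | nil => intro a; simp [tops, botf]
  | cons b t IH =>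
    intro a
    simp only [tops, botf, List.map_cons, List.sum_cons]
    have h1 := IH (a ⊓ b)
    have h2 := hsub a b
    linarith

lemma bot_tops_multiset :
    ∀ (t : List (ℤ → ℝ)) (a : ℤ → ℝ) (i : ℤ),
      (botf a t i ::ₘ (((tops a t).map (fun f => f i) : List ℝ) : Multiset ℝ)) =
        (a i ::ₘ ((t.map (fun f => f i) : List ℝ) : Multiset ℝ)) := by
  intro t
  induction t with
  | nil => intro a i; simp [tops, botf]
  | cons b t IH =>
    intro a i
    simp only [tops, botf, List.map_cons]
    rw [← Multiset.cons_coe, ← Multiset.cons_coe]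
    rw [Multiset.cons_swap]
    rw [IH (a ⊓ b) i]
    have hpair : ((a ⊓ b) i ::ₘ ((a ⊔ b) i ::ₘ
          ((t.map (fun f => f i) : List ℝ) : Multiset ℝ))) =
        (b i ::ₘ (a i ::ₘ ((t.map (fun f => f i) : List ℝ) : Multiset ℝ))) := by
      simp only [Pi.inf_apply, Pi.sup_apply]
      rcases le_total (a i) (b i) with h | h
      · rw [min_eq_left h, max_eq_right h, Multiset.cons_swap]
      · rw [min_eq_right h, max_eq_left h]
    rw [Multiset.cons_swap, hpair, Multiset.cons_swap]

lemma bot_foldl : ∀ (t : List (ℤ → ℝ)) (a : ℤ → ℝ) (i : ℤ),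
    botf a t i = List.foldl min (a i) (t.map (fun f => f i)) := by
  intro t
  induction t with
  | nil => intro a i; rfl
  | cons b t IH =>
    intro a i
    simp only [botf, List.map_cons, List.foldl_cons]
    rw [IH (a ⊓ b) i]
    rfl

lemma foldl_min_le : ∀ (l : List ℝ) (x : ℝ),
    List.foldl min x l ≤ x ∧ ∀ y ∈ l, List.foldl min x l ≤ y := by
  intro l
  induction l with
  | nil => intro x; exact ⟨le_rfl, fun y hy => absurd hy List.not_mem_nil⟩
  | cons b t IH =>
    intro x
    constructor
    · exact le_trans (IH (min x b)).1 (min_le_left _ _)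
    · intro y hy
      rcases List.mem_cons.1 hy with h | h
      · rw [h]; exact le_trans (IH (min x b)).1 (min_le_right _ _)
      · exact (IH (min x b)).2 y h

lemma foldl_min_mem : ∀ (l : List ℝ) (x : ℝ), List.foldl min x l ∈ x :: l := by
  intro l
  induction l with
  | nil => intro x; simp
  | cons b t IH =>
    intro x
    simp only [List.foldl_cons]
    have hmem := IH (min x b)
    rcases List.mem_cons.1 hmem with h | h
    · rcases min_choice x b with h' | h'
      · rw [h, h']; simp
      · rw [h, h']; simp
    · simp only [List.mem_cons]
      right; right; exact h

lemma foldl_min_perm {l l' : List ℝ} {x x' : ℝ} (h : (x :: l).Perm (x' :: l')) :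
    List.foldl min x l = List.foldl min x' l' := by
  apply le_antisymm
  · have hmem : List.foldl min x' l' ∈ x :: l := h.symm.subset (foldl_min_mem l' x')
    rcases List.mem_cons.1 hmem with h1 | h1
    · rw [h1]; exact (foldl_min_le l x).1
    · exact (foldl_min_le l x).2 _ h1
  · have hmem : List.foldl min x l ∈ x' :: l' := h.subset (foldl_min_mem l x)
    rcases List.mem_cons.1 hmem with h1 | h1
    · rw [h1]; exact (foldl_min_le l' x').1
    · exact (foldl_min_le l' x').2 _ h1

lemma bot_const (a : ℤ → ℝ) (t : List (ℤ → ℝ))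
    (huni : ∀ i i' : ℤ,
      ((((a :: t).map (fun f => f i)) : List ℝ) : Multiset ℝ) =
        (((a :: t).map (fun f => f i') : List ℝ) : Multiset ℝ)) :
    ∀ i i' : ℤ, botf a t i = botf a t i' := by
  intro i i'
  rw [bot_foldl, bot_foldl]
  apply foldl_min_perm
  have := huni i i'
  simp only [List.map_cons] at this
  rwa [Multiset.coe_eq_coe] at this

lemma sort_bound (E : (ℤ → ℝ) → ℝ)
    (hsub : ∀ X Y : ℤ → ℝ, E (X ⊓ Y) + E (X ⊔ Y) ≤ E X + E Y)
    (B : ℝ) (hB : ∀ c : ℝ, B ≤ E (fun _ => c)) :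
    ∀ (N : ℕ) (l : List (ℤ → ℝ)), l.length = N →
      (∀ i i' : ℤ, ((l.map (fun f => f i) : List ℝ) : Multiset ℝ) =
        ((l.map (fun f => f i') : List ℝ) : Multiset ℝ)) →
      (N : ℝ) * B ≤ (l.map E).sum := by
  intro N
  induction N with
  | zero =>
    intro l hlen _
    rw [List.length_eq_zero_iff] at hlen
    subst hlen
    simp
  | succ m IH =>
    intro l hlen huni
    cases l with
    | nil => simp at hlen
    | cons a t =>
      have hlent : t.length = m := by simpa using hlen
      have hbc := bot_const a t huni
      have hconst : botf a t = fun _ => botf a t 0 := funext fun i => hbc i 0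
      have h2 : B ≤ E (botf a t) := by rw [hconst]; exact hB _
      have htu : ∀ i i' : ℤ,
          (((tops a t).map (fun f => f i) : List ℝ) : Multiset ℝ) =
            (((tops a t).map (fun f => f i') : List ℝ) : Multiset ℝ) := by
        intro i i'
        have e1 := bot_tops_multiset t a i
        have e2 := bot_tops_multiset t a i'
        have e3 : botf a t i = botf a t i' := hbc i i'
        have e4 := huni i i'
        simp only [List.map_cons] at e4
        rw [← Multiset.cons_coe, ← Multiset.cons_coe] at e4
        have e5 : (botf a t i ::ₘ (((tops a t).map (fun f => f i) : List ℝ) : Multiset ℝ)) =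
            (botf a t i ::ₘ (((tops a t).map (fun f => f i') : List ℝ) : Multiset ℝ)) := by
          rw [e1, e4, ← e2, e3]
        exact (Multiset.cons_inj_right _).1 e5
      have h3 := IH (tops a t) (by rw [tops_length]; exact hlent) htu
      have h1 := bot_tops_energy E hsub t a
      simp only [List.map_cons, List.sum_cons]
      push_cast
      linarith

end Sorting
section PLB

lemma Icc_split (f : ℤ → ℝ) (a m b : ℤ) (h1 : a ≤ m) (h2 : m ≤ b + 1) :
    ∑ i ∈ Finset.Icc a b, f i =
      ∑ i ∈ Finset.Icc a (m - 1), f i + ∑ i ∈ Finset.Icc m b, f i := by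
  have hdisj : Disjoint (Finset.Icc a (m - 1)) (Finset.Icc m b) := by
    rw [Finset.disjoint_left]
    intro x hx hx'
    simp only [Finset.mem_Icc] at hx hx'
    omega
  rw [← Finset.sum_union hdisj]
  congr 1
  ext x
  simp only [Finset.mem_union, Finset.mem_Icc]
  omega

lemma range_succ_left (m : ℕ) : List.range (m + 1) = 0 :: (List.range m).map Nat.succ :=
  List.range_succ_eq_map (n := m)

lemma list_map_range_sum (f : ℕ → ℝ) : ∀ N : ℕ,
    ((List.range N).map f).sum = ∑ j ∈ Finset.range N, f j := by
  intro N
  induction N with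
  | zero => simp
  | succ m IH => rw [List.range_succ, Finset.sum_range_succ]; simp [IH]

lemma shift1_sum (g : ℤ → ℝ) (L : ℤ) (hL : 0 < L) (hg : ∀ i, g (i + L) = g i) (a : ℤ) :
    ∑ i ∈ Finset.Icc (a + 1) (a + L), g i = ∑ i ∈ Finset.Icc a (a + L - 1), g i := by
  have e1 : Finset.Icc (a + 1) (a + L) = insert (a + L) (Finset.Icc (a + 1) (a + L - 1)) := by
    ext x
    simp only [Finset.mem_Icc, Finset.mem_insert]
    omega
  have e2 : Finset.Icc a (a + L - 1) = insert a (Finset.Icc (a + 1) (a + L - 1)) := by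
    ext x
    simp only [Finset.mem_Icc, Finset.mem_insert]
    omega
  rw [e1, Finset.sum_insert (by simp only [Finset.mem_Icc]; omega),
    e2, Finset.sum_insert (by simp only [Finset.mem_Icc]; omega), hg a]

lemma window_shift (g : ℤ → ℝ) (L : ℤ) (hL : 0 < L) (hg : ∀ i, g (i + L) = g i) :
    ∀ (j : ℕ) (a : ℤ),
      ∑ i ∈ Finset.Icc (a + (j : ℤ)) (a + (j : ℤ) + L - 1), g i =
        ∑ i ∈ Finset.Icc a (a + L - 1), g i := by
  intro j
  induction j with
  | zero => intro a; simp
  | succ m IH =>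
    intro a
    have h2 : ((m + 1 : ℕ) : ℤ) = (m : ℤ) + 1 := by push_cast; ring
    have h1 : Finset.Icc (a + ((m : ℤ) + 1)) (a + ((m : ℤ) + 1) + L - 1) =
        Finset.Icc ((a + 1) + (m : ℤ)) ((a + 1) + (m : ℤ) + L - 1) := by
      congr 1 <;> ring
    rw [h2, h1, IH (a + 1)]
    have h3 : a + 1 + L - 1 = a + L := by ring
    rw [h3, shift1_sum g L hL hg a]

variable {m R : ℕ} {s : (B0 (m + 1) R → ℝ) → ℝ}

lemma sten_inf (X Y : ℤ → ℝ) (i : ℤ) :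
    (fun k : B0 (m + 1) R => (X ⊓ Y) (i + k.1 0)) =
      (fun k : B0 (m + 1) R => X (i + k.1 0)) ⊓ (fun k : B0 (m + 1) R => Y (i + k.1 0)) := by
  funext k; simp [Pi.inf_apply]

lemma sten_sup (X Y : ℤ → ℝ) (i : ℤ) :
    (fun k : B0 (m + 1) R => (X ⊔ Y) (i + k.1 0)) =
      (fun k : B0 (m + 1) R => X (i + k.1 0)) ⊔ (fun k : B0 (m + 1) R => Y (i + k.1 0)) := by
  funext k; simp [Pi.sup_apply]

lemma PLB (hsm : ContDiff ℝ 2 s)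
    (hcross : ∀ k j : B0 (m + 1) R, k ≠ j → ∀ x, pder (pder s j) k x ≤ 0)
    (hbd : ∃ M : ℝ, ∀ x, M ≤ s x)
    (V : ℤ → ℝ) (L : ℤ) (hL : 0 < L) (hper : ∀ i, V (i + L) = V i) (a : ℤ) :
    (L : ℝ) * c0 s ≤ ∑ i ∈ Finset.Icc a (a + L - 1), s (fun k => V (i + k.1 0)) := by
  have hLR : ((L.toNat : ℕ) : ℝ) = (L : ℝ) := by
    exact_mod_cast congrArg (Int.cast : ℤ → ℝ) (Int.toNat_of_nonneg hL.le)
  set g : ℤ → ℝ := fun i => s (fun k => V (i + k.1 0)) with hgdef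
  have hgper : ∀ i, g (i + L) = g i := by
    intro i
    simp only [hgdef]
    congr 1
    funext k
    have h : i + L + k.1 0 = (i + k.1 0) + L := by ring
    rw [h, hper]
  set Eng : (ℤ → ℝ) → ℝ :=
    fun X => ∑ i ∈ Finset.Icc a (a + L - 1), s (fun k => X (i + k.1 0)) with hEng
  have hsub : ∀ X Y : ℤ → ℝ, Eng (X ⊓ Y) + Eng (X ⊔ Y) ≤ Eng X + Eng Y := by
    intro X Y
    simp only [hEng, ← Finset.sum_add_distrib]
    apply Finset.sum_le_sum
    intro i _
    rw [sten_inf, sten_sup]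
    exact submodular hsm hcross _ _
  have hcard : (Finset.Icc a (a + L - 1)).card = L.toNat := by
    rw [Int.card_Icc]
    congr 1
    omega
  have hB : ∀ c : ℝ, (L : ℝ) * c0 s ≤ Eng (fun _ => c) := by
    intro c
    have h1 : Eng (fun _ => c) = (L : ℝ) * s (fun _ => c) := by
      simp only [hEng]
      rw [Finset.sum_const, hcard, nsmul_eq_mul, hLR]
    rw [h1]
    have h2 := c0_le (s := s) hbd c
    have hL' : (0 : ℝ) ≤ (L : ℝ) := by exact_mod_cast hL.le
    nlinarith
  set N := L.toNat with hN
  have hNpos : 0 < N := by omega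
  set F : ℕ → (ℤ → ℝ) := fun (j : ℕ) (i : ℤ) => V (i + (j : ℤ)) with hF
  set l : List (ℤ → ℝ) := (List.range N).map F with hl
  have hlen : l.length = N := by simp [hl]
  -- pointwise multisets of the list of translates are translation invariant
  set M : ℤ → Multiset ℝ :=
    fun i => (((List.range N).map (fun j : ℕ => V (i + (j : ℤ))) : List ℝ) : Multiset ℝ)
    with hM
  have hstep : ∀ i : ℤ, M (i + 1) = M i := by
    intro i
    obtain ⟨m', hm'⟩ : ∃ m', N = m' + 1 := ⟨N - 1, by omega⟩
    have hcastL : ((m' : ℤ) + 1) = L := by omega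
    have htail : ((List.range m').map (fun j : ℕ => V (i + ((j : ℕ) + 1 : ℕ))) : List ℝ) =
        ((List.range m').map (fun j : ℕ => V ((i + 1) + (j : ℤ))) : List ℝ) := by
      apply List.map_congr_left
      intro j _
      congr 1
      push_cast
      ring
    have hRHS : M i = V i ::ₘ
        (((List.range m').map (fun j : ℕ => V ((i + 1) + (j : ℤ))) : List ℝ) : Multiset ℝ) := by
      rw [hM]
      simp only
      rw [hm', range_succ_left m', List.map_cons, List.map_map]
      rw [← Multiset.cons_coe]
      congr 1
      · simp
      · rw [← htail]
        congr 1
    have hLHS : M (i + 1) = V i ::ₘ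
        (((List.range m').map (fun j : ℕ => V ((i + 1) + (j : ℤ))) : List ℝ) : Multiset ℝ) := by
      rw [hM]
      simp only
      rw [hm', List.range_succ, List.map_append]
      have hlast : V ((i + 1) + (m' : ℤ)) = V i := by
        have h : (i + 1) + (m' : ℤ) = i + L := by omega
        rw [h, hper]
      rw [← Multiset.coe_add]
      simp only [List.map_cons, List.map_nil, hlast]
      rw [Multiset.coe_singleton, add_comm, Multiset.singleton_add]
    rw [hLHS, hRHS]
  have hMall : ∀ i : ℤ, M i = M 0 := by
    intro i
    induction i using Int.induction_on with
    | zero => rfl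
    | succ k ih => rw [hstep k, ih]
    | pred k ih =>
      have := hstep (-(k : ℤ) - 1)
      have h1 : (-(k : ℤ) - 1) + 1 = -(k : ℤ) := by ring
      rw [h1] at this
      rw [← this]
      exact ih
  have huni : ∀ i i' : ℤ, ((l.map (fun f => f i) : List ℝ) : Multiset ℝ) =
      ((l.map (fun f => f i') : List ℝ) : Multiset ℝ) := by
    intro i i'
    have hmap : ∀ i'' : ℤ, (l.map (fun f => f i'') : List ℝ) =
        ((List.range N).map (fun j : ℕ => V (i'' + (j : ℤ))) : List ℝ) := by
      intro i''
      rw [hl, List.map_map]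
      rfl
    rw [hmap i, hmap i']
    rw [show (((List.range N).map (fun j : ℕ => V (i + (j : ℤ))) : List ℝ) : Multiset ℝ) = M i
      from rfl]
    rw [show (((List.range N).map (fun j : ℕ => V (i' + (j : ℤ))) : List ℝ) : Multiset ℝ) = M i'
      from rfl]
    rw [hMall i, hMall i']
  have hsort := sort_bound Eng hsub ((L : ℝ) * c0 s) hB N l hlen huni
  -- compute the energy of each translate
  have hEtrans : ∀ j : ℕ, Eng (F j) = Eng V := by
    intro j
    have h1 : Eng (F j) = ∑ i ∈ Finset.Icc a (a + L - 1), g (i + (j : ℤ)) := by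
      simp only [hEng, hgdef, hF]
      apply Finset.sum_congr rfl
      intro i _
      congr 1
      funext k
      congr 1
      ring
    have h2 : ∑ i ∈ Finset.Icc a (a + L - 1), g (i + (j : ℤ)) =
        ∑ i ∈ Finset.Icc (a + (j : ℤ)) (a + L - 1 + (j : ℤ)), g i := by
      rw [← Finset.map_add_right_Icc, Finset.sum_map]
      rfl
    have h3 : Finset.Icc (a + (j : ℤ)) (a + L - 1 + (j : ℤ)) =
        Finset.Icc (a + (j : ℤ)) (a + (j : ℤ) + L - 1) := by
      congr 1
      ring
    rw [h1, h2, h3, window_shift g L hL hgper j a]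
  have hsum : (l.map Eng).sum = (N : ℝ) * Eng V := by
    rw [hl, List.map_map]
    rw [show (Eng ∘ F) = fun j : ℕ => Eng (F j) from rfl]
    rw [list_map_range_sum]
    rw [Finset.sum_congr rfl (fun j _ => hEtrans j)]
    rw [Finset.sum_const, Finset.card_range, nsmul_eq_mul]
  rw [hsum] at hsort
  have hNR : (0 : ℝ) < (N : ℝ) := by exact_mod_cast hNpos
  have := le_of_mul_le_mul_left (by linarith [hsort] : (N : ℝ) * ((L : ℝ) * c0 s) ≤ (N : ℝ) * Eng V) hNR
  exact this

end PLB
section Core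

variable {m R : ℕ} {s : (B0 (m + 1) R → ℝ) → ℝ}

lemma core_bound (hs : IsPotential (m + 1) R s) (c : ℝ) (hc : s (fun _ => c) = c0 s)
    (ε : ℝ) (hε : 0 < ε) :
    ∃ η : ℝ, 0 < η ∧ ∀ (U : ℤ → ℝ) (p' p : ℤ), p' ≤ p →
      (∀ i : ℤ, p' - (R : ℤ) ≤ i → i ≤ p + (R : ℤ) → |U i - c| ≤ η) →
      -ε ≤ ∑ i ∈ Finset.Icc p' p, (s (fun k => U (i + k.1 0)) - c0 s) := by
  set εb : ℝ := ε / (2 * (R : ℝ) + 1) with hεb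
  have hRR : (0 : ℝ) ≤ (R : ℝ) := Nat.cast_nonneg R
  have hεb0 : 0 < εb := by
    apply div_pos hε
    linarith
  -- continuity of s at the constant c
  have hcont : ContinuousAt s (fun _ => c) := hs.smooth.continuous.continuousAt
  obtain ⟨δ, hδ0, hδ⟩ := Metric.continuousAt_iff.mp hcont εb hεb0
  refine ⟨δ / 2, by linarith, ?_⟩
  intro U p' p hpp hU
  set Rz : ℤ := (R : ℤ) with hRz
  have hRz0 : 0 ≤ Rz := by positivity
  set L : ℤ := p - p' + 1 + 2 * Rz with hLdef
  have hL : 0 < L := by omega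
  set a : ℤ := p' - Rz with ha
  set V : ℤ → ℝ := fun i => U (a + (i - a) % L) with hV
  have hmod : ∀ i : ℤ, 0 ≤ (i - a) % L ∧ (i - a) % L < L :=
    fun i => ⟨Int.emod_nonneg _ (by omega), Int.emod_lt_of_pos _ hL⟩
  have hVwin : ∀ i : ℤ, a ≤ i → i ≤ p + Rz → V i = U i := by
    intro i h1 h2
    have h3 : (i - a) % L = i - a := Int.emod_eq_of_lt (by omega) (by omega)
    simp only [hV, h3]
    congr 1
    omega
  have hVper : ∀ i : ℤ, V (i + L) = V i := by
    intro i
    simp only [hV]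
    congr 2
    have h1 : i + L - a = (i - a) + L * 1 := by ring
    rw [h1, Int.add_mul_emod_self_left]
  have hVnear : ∀ i : ℤ, |V i - c| ≤ δ / 2 := by
    intro i
    apply hU
    · have := (hmod i).1; omega
    · have := (hmod i).2; omega
  have bd1 : ∀ i : ℤ, s (fun k => V (i + k.1 0)) ≤ c0 s + εb := by
    intro i
    have hdist : dist (fun k : B0 (m + 1) R => V (i + k.1 0)) (fun _ => c) ≤ δ / 2 := by
      apply (dist_pi_le_iff (by linarith)).2
      intro k
      rw [Real.dist_eq]
      exact hVnear _
    have := hδ (lt_of_le_of_lt hdist (by linarith))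
    rw [Real.dist_eq, hc] at this
    have := abs_lt.1 this
    linarith [this.2]
  have hPLB := PLB hs.smooth hs.cross_nonpos hs.bddBelow V L hL hVper a
  -- identify endpoints
  have hend : a + L - 1 = p + Rz := by omega
  rw [hend] at hPLB
  -- split the window sum
  have hsplit1 := Icc_split (fun i => s (fun k => V (i + k.1 0))) a p' (p + Rz)
    (by omega) (by omega)
  have hsplit2 := Icc_split (fun i => s (fun k => V (i + k.1 0))) p' (p + 1) (p + Rz)
    (by omega) (by omega)
  have hmid_eq : ∑ i ∈ Finset.Icc p' (p + 1 - 1), s (fun k => V (i + k.1 0)) =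
      ∑ i ∈ Finset.Icc p' p, s (fun k => U (i + k.1 0)) := by
    have h0 : p + 1 - 1 = p := by ring
    rw [h0]
    apply Finset.sum_congr rfl
    intro i hi
    simp only [Finset.mem_Icc] at hi
    congr 1
    funext k
    have hk := B0.coord_mem k 0
    simp only [Finset.mem_Icc] at hk
    apply hVwin <;> omega
  -- boundary bounds
  have hcardL : ((Finset.Icc a (p' - 1)).card : ℝ) = (R : ℝ) := by
    rw [Int.card_Icc]
    have : (p' - 1 + 1 - a).toNat = R := by omega
    rw [this]
  have hcardR : ((Finset.Icc (p + 1) (p + Rz)).card : ℝ) = (R : ℝ) := by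
    rw [Int.card_Icc]
    have : (p + Rz + 1 - (p + 1)).toNat = R := by omega
    rw [this]
  have hbdL : ∑ i ∈ Finset.Icc a (p' - 1), s (fun k => V (i + k.1 0)) ≤
      (R : ℝ) * (c0 s + εb) := by
    rw [← hcardL]
    have := Finset.sum_le_card_nsmul (Finset.Icc a (p' - 1))
      (fun i => s (fun k => V (i + k.1 0))) (c0 s + εb) (fun i _ => bd1 i)
    rwa [nsmul_eq_mul] at this
  have hbdR : ∑ i ∈ Finset.Icc (p + 1) (p + Rz), s (fun k => V (i + k.1 0)) ≤
      (R : ℝ) * (c0 s + εb) := by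
    rw [← hcardR]
    have := Finset.sum_le_card_nsmul (Finset.Icc (p + 1) (p + Rz))
      (fun i => s (fun k => V (i + k.1 0))) (c0 s + εb) (fun i _ => bd1 i)
    rwa [nsmul_eq_mul] at this
  -- the target sum
  have htarget : ∑ i ∈ Finset.Icc p' p, (s (fun k => U (i + k.1 0)) - c0 s) =
      (∑ i ∈ Finset.Icc p' p, s (fun k => U (i + k.1 0))) - (p - p' + 1 : ℝ) * c0 s := by
    rw [Finset.sum_sub_distrib, Finset.sum_const, nsmul_eq_mul]
    congr 2
    rw [Int.card_Icc]
    have h4 : ((p + 1 - p').toNat : ℤ) = p + 1 - p' := Int.toNat_of_nonneg (by omega)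
    have h5 : (((p + 1 - p').toNat : ℕ) : ℝ) = ((p + 1 - p' : ℤ) : ℝ) := by
      exact_mod_cast congrArg (Int.cast : ℤ → ℝ) h4
    rw [h5]
    push_cast
    ring
  have hLcast : ((L : ℤ) : ℝ) = (p - p' + 1 : ℝ) + 2 * (R : ℝ) := by
    rw [hLdef]
    push_cast [hRz]
    ring
  have hfinal : 2 * (R : ℝ) * εb ≤ ε := by
    have h6 : εb * (2 * (R : ℝ) + 1) = ε := div_mul_cancel₀ ε (by linarith)
    nlinarith [hεb0]
  rw [htarget]
  rw [hmid_eq] at hsplit2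
  rw [hLcast] at hPLB
  linarith [hPLB, hsplit1, hsplit2, hbdL, hbdR, hfinal]

end Core
section ERealLimits

open Filter

lemma ereal_le_of_forall_add {x y : EReal} (h : ∀ ε : ℝ, 0 < ε → x ≤ y + (ε : EReal)) :
    x ≤ y := by
  induction y using EReal.rec with
  | bot =>
    have := h 1 one_pos
    simpa using this
  | coe y =>
    induction x using EReal.rec with
    | bot => exact bot_le
    | coe x =>
      have hxy : ∀ ε : ℝ, 0 < ε → x ≤ y + ε := by
        intro ε hε
        have := h ε hε
        rw [← EReal.coe_add] at this
        exact_mod_cast this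
      by_contra hcon
      push_neg at hcon
      rw [EReal.coe_lt_coe_iff] at hcon
      have := hxy ((x - y) / 2) (by linarith)
      linarith
    | top =>
      exfalso
      have := h 1 one_pos
      rw [← EReal.coe_add] at this
      exact (EReal.coe_lt_top (y + 1)).not_ge this
  | top => exact le_top

lemma ereal_add_ne_bot {x y : EReal} (hx : x ≠ ⊥) (hy : y ≠ ⊥) : x + y ≠ ⊥ := by
  induction x using EReal.rec with
  | bot => exact absurd rfl hx
  | coe x =>
    induction y using EReal.rec with
    | bot => exact absurd rfl hy
    | coe y => rw [← EReal.coe_add]; exact EReal.coe_ne_bot _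
    | top => simp
  | top =>
    induction y using EReal.rec with
    | bot => exact absurd rfl hy
    | coe y => simp
    | top => simp

lemma onesided_atBot (A : ℤ → ℝ)
    (h : ∀ ε : ℝ, 0 < ε → ∃ P : ℤ, ∀ p' p : ℤ, p' ≤ p → p ≤ P → A p - ε ≤ A p') :
    ∃ α : EReal, α ≠ ⊥ ∧ Tendsto (fun p => (A p : EReal)) atBot (nhds α) := by
  set Ae : ℤ → EReal := fun p => (A p : EReal) with hAe
  have hliminf_ge : ∀ ε : ℝ, 0 < ε → ∀ p : ℤ, (∀ p' ≤ p, A p - ε ≤ A p') →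
      ((A p - ε : ℝ) : EReal) ≤ liminf Ae atBot := by
    intro ε hε p hp
    refine Filter.le_liminf_of_le (by isBoundedDefault) ?_
    filter_upwards [eventually_le_atBot p] with p' hp'
    exact EReal.coe_le_coe_iff.2 (hp p' hp')
  have hls : limsup Ae atBot ≤ liminf Ae atBot := by
    apply ereal_le_of_forall_add
    intro ε hε
    obtain ⟨P, hP⟩ := h ε hε
    refine Filter.limsup_le_of_le (by isBoundedDefault) ?_
    filter_upwards [eventually_le_atBot P] with p hp
    have h1 : ((A p - ε : ℝ) : EReal) ≤ liminf Ae atBot :=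
      hliminf_ge ε hε p (fun p' hp' => hP p' p hp' hp)
    calc Ae p = ((A p - ε : ℝ) : EReal) + (ε : EReal) := by
          rw [← EReal.coe_add]
          norm_num [hAe]
      _ ≤ liminf Ae atBot + (ε : EReal) := add_le_add_left h1 _
  have hsl : liminf Ae atBot ≤ limsup Ae atBot := liminf_le_limsup
  have heq : liminf Ae atBot = limsup Ae atBot := le_antisymm hsl hls
  refine ⟨limsup Ae atBot, ?_, ?_⟩
  · obtain ⟨P, hP⟩ := h 1 one_pos
    have h1 : ((A P - 1 : ℝ) : EReal) ≤ liminf Ae atBot :=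
      hliminf_ge 1 one_pos P (fun p' hp' => hP p' P hp' le_rfl)
    intro hcon
    rw [heq, hcon] at h1
    exact (EReal.bot_lt_coe (A P - 1)).not_ge h1
  · exact tendsto_of_liminf_eq_limsup heq rfl

lemma onesided_atTop (Bf : ℤ → ℝ)
    (h : ∀ ε : ℝ, 0 < ε → ∃ Q : ℤ, ∀ q q' : ℤ, q ≤ q' → Q ≤ q → Bf q - ε ≤ Bf q') :
    ∃ β : EReal, β ≠ ⊥ ∧ Tendsto (fun q => (Bf q : EReal)) atTop (nhds β) := by
  obtain ⟨β, hβ, htd⟩ := onesided_atBot (fun p => Bf (-p)) (by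
    intro ε hε
    obtain ⟨Q, hQ⟩ := h ε hε
    refine ⟨-Q, fun p' p hp' hp => ?_⟩
    exact hQ (-p) (-p') (by omega) (by omega))
  refine ⟨β, hβ, ?_⟩
  have hcomp : Tendsto (fun q : ℤ => -q) atTop (atBot : Filter ℤ) :=
    tendsto_neg_atTop_atBot
  have h2 := htd.comp hcomp
  have h3 : ((fun p : ℤ => ((Bf (-p) : ℝ) : EReal)) ∘ fun q : ℤ => -q) =
      fun q : ℤ => ((Bf q : ℝ) : EReal) := by
    funext q
    simp
  rwa [h3] at h2

lemma tendsto_of_tail_bounds (D : ℤ → ℝ)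
    (hminus : ∀ ε : ℝ, 0 < ε → ∃ P : ℤ, ∀ p' p : ℤ, p' ≤ p → p ≤ P →
      -ε ≤ ∑ i ∈ Finset.Icc p' p, D i)
    (hplus : ∀ ε : ℝ, 0 < ε → ∃ Q : ℤ, ∀ q q' : ℤ, q ≤ q' → Q ≤ q →
      -ε ≤ ∑ i ∈ Finset.Icc q q', D i) :
    Filter.Tendsto (fun pq : ℤ × ℤ => ((∑ i ∈ Finset.Icc pq.1 pq.2, D i : ℝ) : EReal))
      (Filter.atBot ×ˢ Filter.atTop)
      (nhds (Filter.liminf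
        (fun pq : ℤ × ℤ => ((∑ i ∈ Finset.Icc pq.1 pq.2, D i : ℝ) : EReal))
        (Filter.atBot ×ˢ Filter.atTop))) := by
  set A : ℤ → ℝ := fun p => ∑ i ∈ Finset.Icc p (-1), D i with hA
  set Bf : ℤ → ℝ := fun q => ∑ i ∈ Finset.Icc 1 q, D i with hB
  -- convergence of the left tail
  obtain ⟨α, hα, hAlim⟩ := onesided_atBot A (by
    intro ε hε
    obtain ⟨P, hP⟩ := hminus ε hε
    refine ⟨min (P + 1) 0, fun p' p hp' hp => ?_⟩
    have hp0 : p ≤ 0 := le_trans hp (min_le_right _ _)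
    have hsplit := Icc_split D p' p (-1) hp' (by omega)
    rcases eq_or_lt_of_le hp' with heq | hlt
    · rw [heq]; linarith
    · have htail : -ε ≤ ∑ i ∈ Finset.Icc p' (p - 1), D i :=
        hP p' (p - 1) (by omega) (by
          have := min_le_left (P + 1) (0 : ℤ)
          omega)
      simp only [hA]
      linarith)
  -- convergence of the right tail
  obtain ⟨β, hβ, hBlim⟩ := onesided_atTop Bf (by
    intro ε hε
    obtain ⟨Q, hQ⟩ := hplus ε hε
    refine ⟨max (Q - 1) 0, fun q q' hq hq' => ?_⟩
    have hq0 : 0 ≤ q := le_trans (le_max_right _ _) hq'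
    have hsplit := Icc_split D 1 (q + 1) q' (by omega) (by omega)
    rcases eq_or_lt_of_le hq with heq | hlt
    · rw [heq]; linarith
    · have htail : -ε ≤ ∑ i ∈ Finset.Icc (q + 1) q', D i :=
        hQ (q + 1) q' (by omega) (by
          have := le_max_left (Q - 1) (0 : ℤ)
          omega)
      simp only [hB]
      have h1 : q + 1 - 1 = q := by ring
      rw [h1] at hsplit
      linarith)
  -- the split of the double sum
  have hsplit : ∀ p q : ℤ, p ≤ 0 → 0 ≤ q →
      ∑ i ∈ Finset.Icc p q, D i = A p + (D 0 + Bf q) := by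
    intro p q hp hq
    have h1 := Icc_split D p 0 q hp (by omega)
    have h2 := Icc_split D 0 1 q (by omega) (by omega)
    have h3 : (0 : ℤ) - 1 = -1 := by ring
    have h4 : (1 : ℤ) - 1 = 0 := by ring
    rw [h3] at h1
    rw [h4] at h2
    have h5 : ∑ i ∈ Finset.Icc (0 : ℤ) 0, D i = D 0 := by simp
    rw [h5] at h2
    simp only [hA, hB]
    linarith
  -- limit of the combination
  set γ : EReal := α + (((D 0 : ℝ) : EReal) + β) with hγ
  have hβ' : ((D 0 : ℝ) : EReal) + β ≠ ⊥ := ereal_add_ne_bot (EReal.coe_ne_bot _) hβ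
  have hinner : Tendsto (fun pq : ℤ × ℤ => ((D 0 : ℝ) : EReal) + (Bf pq.2 : EReal))
      (Filter.atBot ×ˢ Filter.atTop) (nhds (((D 0 : ℝ) : EReal) + β)) := by
    have h1 : Tendsto (fun pq : ℤ × ℤ => (Bf pq.2 : EReal))
        (Filter.atBot ×ˢ Filter.atTop) (nhds β) := hBlim.comp tendsto_snd
    have hca : ContinuousAt (fun z : EReal × EReal => z.1 + z.2) (((D 0 : ℝ) : EReal), β) :=
      EReal.continuousAt_add (by left; exact EReal.coe_ne_top _)
        (by left; exact EReal.coe_ne_bot _)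
    exact hca.tendsto.comp (tendsto_const_nhds.prodMk_nhds h1)
  have houter : Tendsto (fun pq : ℤ × ℤ =>
      (A pq.1 : EReal) + (((D 0 : ℝ) : EReal) + (Bf pq.2 : EReal)))
      (Filter.atBot ×ˢ Filter.atTop) (nhds γ) := by
    have h1 : Tendsto (fun pq : ℤ × ℤ => (A pq.1 : EReal))
        (Filter.atBot ×ˢ Filter.atTop) (nhds α) := hAlim.comp tendsto_fst
    have hca : ContinuousAt (fun z : EReal × EReal => z.1 + z.2)
        (α, ((D 0 : ℝ) : EReal) + β) :=
      EReal.continuousAt_add (by right; exact hβ') (by left; exact hα)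
    exact hca.tendsto.comp (h1.prodMk_nhds hinner)
  have hev : (fun pq : ℤ × ℤ => ((∑ i ∈ Finset.Icc pq.1 pq.2, D i : ℝ) : EReal))
      =ᶠ[Filter.atBot ×ˢ Filter.atTop]
      (fun pq : ℤ × ℤ => (A pq.1 : EReal) + (((D 0 : ℝ) : EReal) + (Bf pq.2 : EReal))) := by
    have hmem : Set.Iic (0 : ℤ) ×ˢ Set.Ici (0 : ℤ) ∈ (Filter.atBot ×ˢ Filter.atTop :
        Filter (ℤ × ℤ)) :=
      Filter.prod_mem_prod (Filter.Iic_mem_atBot 0) (Filter.Ici_mem_atTop 0)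
    filter_upwards [hmem] with pq hpq
    obtain ⟨h1, h2⟩ := hpq
    rw [hsplit pq.1 pq.2 h1 h2]
    rw [EReal.coe_add, EReal.coe_add]
  have hmain : Tendsto (fun pq : ℤ × ℤ => ((∑ i ∈ Finset.Icc pq.1 pq.2, D i : ℝ) : EReal))
      (Filter.atBot ×ˢ Filter.atTop) (nhds γ) := Tendsto.congr' hev.symm houter
  have hliminf : Filter.liminf
      (fun pq : ℤ × ℤ => ((∑ i ∈ Finset.Icc pq.1 pq.2, D i : ℝ) : EReal))
      (Filter.atBot ×ˢ Filter.atTop) = γ := hmain.liminf_eq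
  rw [hliminf]
  exact hmain

end ERealLimits
/-- for `u ∈ Γ_1(v,w)`, `J_{1,i}(u) → 0` as `|i| → ∞`, and if `J_1(u) < ∞`
then the double limit of `J_{1;p,q}(u)` exists and equals `J_1(u)`. -/
theorem statement_5 (n r : ℕ) (s : (B0 (n + 2) (r + 1) → ℝ) → ℝ)
    (hs : IsPotential (n + 2) (r + 1) s) (v w : Lat (n + 2) → ℝ)
    (hv : v ∈ M0 s) (hw : w ∈ M0 s) (hvw : ∀ i, v i < w i)
    (u : Lat (n + 2) → ℝ) (hu : u ∈ Gamma1 v w) :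
    Filter.Tendsto (fun i : ℤ => J1i s i u) absAtTop (nhds 0) ∧
      (J1 s u < ⊤ →
        Filter.Tendsto (fun pq : ℤ × ℤ => ((J1pq s pq.1 pq.2 u : ℝ) : EReal))
          (Filter.atBot ×ˢ Filter.atTop) (nhds (J1 s u))) := by
  classical
  obtain ⟨⟨htail, hvu, huw⟩, hvlim, hwlim⟩ := hu
  set U : ℤ → ℝ := fun i => u (latT i) with hU
  have hvc : ∀ j, v j = v 0 := fully_const (m := n + 1) hv.1
  have hwc : ∀ j, w j = w 0 := fully_const (m := n + 1) hw.1
  -- the limits of U at ±∞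
  have hvd : Filter.Tendsto (fun i : ℤ => |U i - v 0|) Filter.atBot (nhds 0) := by
    refine hvlim.congr (fun i => ?_)
    rw [hvc (latT i)]
  have hwd : Filter.Tendsto (fun i : ℤ => |U i - w 0|) Filter.atTop (nhds 0) := by
    refine hwlim.congr (fun i => ?_)
    rw [hwc (latT i)]
  have hvlim' : Filter.Tendsto U Filter.atBot (nhds (v 0)) := by
    rw [tendsto_iff_dist_tendsto_zero]
    simpa only [Real.dist_eq] using hvd
  have hwlim' : Filter.Tendsto U Filter.atTop (nhds (w 0)) := by
    rw [tendsto_iff_dist_tendsto_zero]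
    simpa only [Real.dist_eq] using hwd
  -- minimality of the constants v 0 and w 0
  have hsv : s (fun _ => v 0) = c0 s := c0_eq_of_mem (m := n + 1) hv
  have hsw : s (fun _ => w 0) = c0 s := c0_eq_of_mem (m := n + 1) hw
  -- the 1D reduction of the local energies
  have hJ1i : ∀ i : ℤ, J1i s i u = s (fun k => U (i + k.1 0)) - c0 s := by
    intro i
    unfold J1i
    rw [spot_reduce (m := n + 1) htail i]
  constructor
  · -- Part 1 : J1i → 0 as |i| → ∞
    have habs : absAtTop = (Filter.atBot ⊔ Filter.atTop : Filter ℤ) := comap_abs_atTop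
    rw [habs, Filter.tendsto_sup]
    constructor
    · -- atBot
      have hsten : Filter.Tendsto
          (fun i : ℤ => fun k : B0 (n + 2) (r + 1) => U (i + k.1 0))
          Filter.atBot (nhds (fun _ => v 0)) := by
        rw [tendsto_pi_nhds]
        intro k
        exact hvlim'.comp (Filter.tendsto_atBot_add_const_right _ _ Filter.tendsto_id)
      have h1 := (hs.smooth.continuous.tendsto (fun _ => v 0)).comp hsten
      have h2 : Filter.Tendsto (fun i : ℤ => s (fun k => U (i + k.1 0)) - c0 s)
          Filter.atBot (nhds (s (fun _ => v 0) - c0 s)) := h1.sub_const _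
      rw [hsv, sub_self] at h2
      exact h2.congr (fun i => (hJ1i i).symm)
    · -- atTop
      have hsten : Filter.Tendsto
          (fun i : ℤ => fun k : B0 (n + 2) (r + 1) => U (i + k.1 0))
          Filter.atTop (nhds (fun _ => w 0)) := by
        rw [tendsto_pi_nhds]
        intro k
        exact hwlim'.comp (Filter.tendsto_atTop_add_const_right _ _ Filter.tendsto_id)
      have h1 := (hs.smooth.continuous.tendsto (fun _ => w 0)).comp hsten
      have h2 : Filter.Tendsto (fun i : ℤ => s (fun k => U (i + k.1 0)) - c0 s)
          Filter.atTop (nhds (s (fun _ => w 0) - c0 s)) := h1.sub_const _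
      rw [hsw, sub_self] at h2
      exact h2.congr (fun i => (hJ1i i).symm)
  · -- Part 2 : convergence of the double limit
    intro _
    have hmain := tendsto_of_tail_bounds (fun i => J1i s i u) ?hminus ?hplus
    case hminus =>
      intro ε hε
      obtain ⟨η, hη, hcore⟩ := core_bound (m := n + 1) hs (v 0) hsv ε hε
      have hev := hvd.eventually_lt_const hη
      rw [Filter.eventually_atBot] at hev
      obtain ⟨P₀, hP₀⟩ := hev
      refine ⟨P₀ - (r + 1 : ℕ), fun p' p hpp hpP => ?_⟩
      have h1 := hcore U p' p hpp (fun i h1 h2 => (hP₀ i (by omega)).le)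
      calc -ε ≤ ∑ i ∈ Finset.Icc p' p, (s (fun k => U (i + k.1 0)) - c0 s) := h1
        _ = ∑ i ∈ Finset.Icc p' p, J1i s i u :=
          Finset.sum_congr rfl (fun i _ => (hJ1i i).symm)
    case hplus =>
      intro ε hε
      obtain ⟨η, hη, hcore⟩ := core_bound (m := n + 1) hs (w 0) hsw ε hε
      have hev := hwd.eventually_lt_const hη
      rw [Filter.eventually_atTop] at hev
      obtain ⟨Q₀, hQ₀⟩ := hev
      refine ⟨Q₀ + (r + 1 : ℕ), fun q q' hq hqQ => ?_⟩
      have h1 := hcore U q q' hq (fun i h1 h2 => (hQ₀ i (by omega)).le)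
      calc -ε ≤ ∑ i ∈ Finset.Icc q q', (s (fun k => U (i + k.1 0)) - c0 s) := h1
        _ = ∑ i ∈ Finset.Icc q q', J1i s i u :=
          Finset.sum_congr rfl (fun i _ => (hJ1i i).symm)
    exact hmain

end FK
end

section
/- Let v, w ∈ M_0 with v < w. Suppose u ∈ Γ̂_1(v, w), J_1(u) < ∞, and u is 1-monotone in i_1, i.e., u(i) ≤ u(i + e_1) for all i ∈ ℤ^n. Then u ∈ M_0, or there exist φ, ψ ∈ M_0 with v ≤ φ < ψ ≤ w such that u ∈ Γ_1(φ, ψ). -/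
open scoped BigOperators

namespace FK

/-! ### Auxiliary lemmas for Statement 7 -/

section Statement7Aux

open Filter

lemma f_add_zsmul_latE {n : ℕ} (f : Lat n → ℝ) (m : ℕ)
    (h : ∀ i : Lat n, f (i + latE m) = f i) :
    ∀ (t : ℤ) (i : Lat n), f (i + t • latE m) = f i := by
  intro t
  induction t using Int.induction_on with
  | zero => intro i; simp
  | succ k ih =>
      intro i
      have hstep : i + ((k : ℤ) + 1) • latE m = (i + (k : ℤ) • latE m) + latE m := by
        rw [add_smul, one_smul, add_assoc]
      rw [hstep, h, ih]
  | pred k ih =>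
      intro i
      have key : i + (-(k : ℤ) - 1) • latE m + latE m = i + (-(k : ℤ)) • latE m := by
        have h1 : ((-(k : ℤ) - 1) + 1) • (latE m : Lat n)
            = (-(k : ℤ) - 1) • (latE m : Lat n) + (1 : ℤ) • latE m := add_smul _ _ _
        simp only [one_smul] at h1
        rw [add_assoc, ← h1]
        norm_num
      have h2 := h (i + (-(k : ℤ) - 1) • latE m)
      rw [key, ih] at h2
      exact h2.symm

lemma zero_out {n : ℕ} (f : Lat n → ℝ) (P : ℕ → Prop) [DecidablePred P]
    (h : ∀ (i : Lat n) (k : Fin n), P (k : ℕ) → f (i + latE (k : ℕ)) = f i) (j : Lat n) :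
    f j = f (fun k => if P (k : ℕ) then 0 else j k) := by
  have main : ∀ m : ℕ, f j = f (fun k => if P (k : ℕ) ∧ (k : ℕ) < m then 0 else j k) := by
    intro m
    induction m with
    | zero => congr 1; funext k; simp
    | succ m ih =>
      by_cases hm : m < n
      · by_cases hP : P m
        · have heq : (fun k : Fin n => if P (k : ℕ) ∧ (k : ℕ) < m + 1 then 0 else j k)
              = (fun k : Fin n => if P (k : ℕ) ∧ (k : ℕ) < m then 0 else j k)
                + (-(j ⟨m, hm⟩)) • latE m := by
            funext k
            by_cases hk : (k : ℕ) = m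
            · have hkk : k = ⟨m, hm⟩ := Fin.ext hk
              subst hkk
              simp only [Pi.add_apply, Pi.smul_apply, latE, if_pos hk, smul_eq_mul, mul_one]
              rw [if_pos ⟨by simpa [hk] using hP, by omega⟩, if_neg (by omega)]
              simp
            · simp only [Pi.add_apply, Pi.smul_apply, latE, if_neg hk, smul_eq_mul, mul_zero,
                add_zero]
              have : ((k : ℕ) < m + 1) ↔ ((k : ℕ) < m) := by omega
              exact if_congr (and_congr Iff.rfl this) rfl rfl
          rw [heq, f_add_zsmul_latE f m (fun i => h i ⟨m, hm⟩ hP), ← ih]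
        · have heq : (fun k : Fin n => if P (k : ℕ) ∧ (k : ℕ) < m + 1 then 0 else j k)
              = (fun k : Fin n => if P (k : ℕ) ∧ (k : ℕ) < m then 0 else j k) := by
            funext k
            by_cases hk : (k : ℕ) = m
            · rw [if_neg (by rw [hk]; tauto), if_neg (by rw [hk]; tauto)]
            · have : ((k : ℕ) < m + 1) ↔ ((k : ℕ) < m) := by omega
              exact if_congr (and_congr Iff.rfl this) rfl rfl
          rw [heq, ← ih]
      · have heq : (fun k : Fin n => if P (k : ℕ) ∧ (k : ℕ) < m + 1 then 0 else j k)
            = (fun k : Fin n => if P (k : ℕ) ∧ (k : ℕ) < m then 0 else j k) := by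
          funext k
          have hk := k.2
          have : ((k : ℕ) < m + 1) ↔ ((k : ℕ) < m) := by omega
          exact if_congr (and_congr Iff.rfl this) rfl rfl
        rw [heq, ← ih]
  have hmn := main n
  rw [hmn]
  congr 1
  funext k
  have hk := k.2
  simp [hk]

lemma fullyPeriodic.eq_zero {n : ℕ} {f : Lat n → ℝ} (hf : fullyPeriodic f) (j : Lat n) :
    f j = f 0 := by
  classical
  have := zero_out f (fun _ => True) (fun i k _ => hf i k) j
  simp at this; exact this

lemma tailPeriodic.rep {n : ℕ} {f : Lat (n + 2) → ℝ} (hf : tailPeriodic f) (j : Lat (n + 2)) :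
    f j = f (latT (j (coord0 n))) := by
  classical
  have := zero_out f (fun m => m ≠ 0) (fun i k hk => hf i k hk) j
  rw [this]
  congr 1
  funext k
  by_cases hk : (k : ℕ) = 0
  · have hkk : k = coord0 n := Fin.ext hk
    subst hkk
    simp [latT, coord0]
  · simp [latT, hk]

lemma fullyPeriodic_const {n : ℕ} (t : ℝ) : fullyPeriodic (fun _ : Lat n => t) :=
  fun _ _ => rfl

lemma bddBelow_J0_image {n r : ℕ} {s : (B0 n r → ℝ) → ℝ} (hs : IsPotential n r s) :
    BddBelow (J0 s '' {u | fullyPeriodic u}) := by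
  obtain ⟨M, hM⟩ := hs.bddBelow
  exact ⟨M, by rintro x ⟨u, -, rfl⟩; exact hM _⟩

lemma c0_le_const {n r : ℕ} {s : (B0 n r → ℝ) → ℝ} (hs : IsPotential n r s) (t : ℝ) :
    c0 s ≤ s (fun _ => t) :=
  csInf_le (bddBelow_J0_image hs) ⟨fun _ => t, fullyPeriodic_const t, rfl⟩

lemma Icc_eq_Ioc_pred (p q : ℤ) : Finset.Icc p q = Finset.Ioc (p - 1) q := by
  ext x
  simp only [Finset.mem_Icc, Finset.mem_Ioc]
  omega

lemma sum_Ioc_split (f : ℤ → ℝ) {a b c : ℤ} (hab : a ≤ b) (hbc : b ≤ c) :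
    ∑ i ∈ Finset.Ioc a c, f i
      = ∑ i ∈ Finset.Ioc a b, f i + ∑ i ∈ Finset.Ioc b c, f i := by
  rw [← Finset.Ioc_union_Ioc_eq_Ioc hab hbc, Finset.sum_union]
  rw [Finset.disjoint_left]
  intro x hx hx'
  simp only [Finset.mem_Ioc] at hx hx'
  omega

lemma sum_Ioc_shift (f : ℤ → ℝ) (p q c : ℤ) :
    ∑ i ∈ Finset.Ioc p q, f (i + c) = ∑ i ∈ Finset.Ioc (p + c) (q + c), f i := by
  rw [← Finset.map_add_right_Ioc p q c, Finset.sum_map]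
  rfl

lemma sum_V_le {a : ℤ → ℝ} (hm : Monotone a) {lo hi : ℝ} (hlo : ∀ i, lo ≤ a i)
    (hhi : ∀ i, a i ≤ hi) (R : ℤ) (hR : 0 < R) (p q : ℤ) :
    ∑ i ∈ Finset.Ioc p q, (a (i + R) - a (i - R)) ≤ 2 * (R : ℝ) * (hi - lo) := by
  have hlohi : lo ≤ hi := (hlo 0).trans (hhi 0)
  rcases le_or_gt (p + R) (q - R) with hbig | hsmall
  · rw [Finset.sum_sub_distrib, sum_Ioc_shift a p q R]
    have h2 : ∑ i ∈ Finset.Ioc p q, a (i - R) = ∑ i ∈ Finset.Ioc (p - R) (q - R), a i := by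
      have := sum_Ioc_shift a p q (-R)
      simpa [sub_eq_add_neg] using this
    rw [h2]
    rw [sum_Ioc_split a hbig (by omega : q - R ≤ q + R),
      sum_Ioc_split a (by omega : p - R ≤ p + R) hbig]
    have hA : ∑ i ∈ Finset.Ioc (q - R) (q + R), a i ≤ (Finset.Ioc (q - R) (q + R)).card • hi :=
      Finset.sum_le_card_nsmul _ _ _ (fun i _ => hhi i)
    have hB : (Finset.Ioc (p - R) (p + R)).card • lo ≤ ∑ i ∈ Finset.Ioc (p - R) (p + R), a i :=
      Finset.card_nsmul_le_sum _ _ _ (fun i _ => hlo i)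
    have hcard1 : ((Finset.Ioc (q - R) (q + R)).card : ℝ) = 2 * (R : ℝ) := by
      rw [Int.card_Ioc]
      have h3 : (((q + R - (q - R)).toNat : ℤ)) = 2 * R := by
        rw [Int.toNat_of_nonneg (by omega)]; ring
      exact_mod_cast h3
    have hcard2 : ((Finset.Ioc (p - R) (p + R)).card : ℝ) = 2 * (R : ℝ) := by
      rw [Int.card_Ioc]
      have h3 : (((p + R - (p - R)).toNat : ℤ)) = 2 * R := by
        rw [Int.toNat_of_nonneg (by omega)]; ring
      exact_mod_cast h3
    rw [nsmul_eq_mul, hcard1] at hA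
    rw [nsmul_eq_mul, hcard2] at hB
    have hmid : (0 : ℝ) ≤ 0 := le_refl 0
    nlinarith [hA, hB]
  · have hterm : ∀ i ∈ Finset.Ioc p q, a (i + R) - a (i - R) ≤ hi - lo := by
      intro i _
      have := hhi (i + R)
      have := hlo (i - R)
      linarith
    have hsum : ∑ i ∈ Finset.Ioc p q, (a (i + R) - a (i - R))
        ≤ (Finset.Ioc p q).card • (hi - lo) :=
      Finset.sum_le_card_nsmul _ _ _ hterm
    have hcard : ((Finset.Ioc p q).card : ℝ) ≤ 2 * (R : ℝ) := by
      rw [Int.card_Ioc]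
      have h3 : ((q - p).toNat : ℤ) ≤ 2 * R := by omega
      exact_mod_cast h3
    rw [nsmul_eq_mul] at hsum
    have : ((Finset.Ioc p q).card : ℝ) * (hi - lo) ≤ 2 * (R : ℝ) * (hi - lo) :=
      mul_le_mul_of_nonneg_right hcard (by linarith)
    linarith

lemma eventually_sum_ge_atBot (f : ℤ → ℝ) (Kc δ : ℝ) (hδ : 0 < δ)
    (hlb : ∀ p q : ℤ, -Kc ≤ ∑ i ∈ Finset.Ioc p q, f i)
    (p0 : ℤ) (hp0 : ∀ i ≤ p0, δ ≤ f i) (M : ℝ) :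
    ∀ᶠ pq : ℤ × ℤ in Filter.atBot ×ˢ Filter.atTop, M ≤ ∑ i ∈ Finset.Icc pq.1 pq.2, f i := by
  obtain ⟨N, hN⟩ := exists_nat_ge ((M + Kc) / δ)
  filter_upwards [Filter.Eventually.prod_mk (Filter.eventually_le_atBot (p0 - N))
    (Filter.eventually_ge_atTop p0)] with pq hpq
  obtain ⟨hp, hq⟩ := hpq
  rw [Icc_eq_Ioc_pred, sum_Ioc_split f (by omega : pq.1 - 1 ≤ p0) (by omega : p0 ≤ pq.2)]
  have h1 : (Finset.Ioc (pq.1 - 1) p0).card • δ ≤ ∑ i ∈ Finset.Ioc (pq.1 - 1) p0, f i :=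
    Finset.card_nsmul_le_sum _ _ _ (fun i hi => hp0 i (Finset.mem_Ioc.1 hi).2)
  have h2 := hlb p0 pq.2
  have hcard : (N : ℝ) ≤ ((Finset.Ioc (pq.1 - 1) p0).card : ℝ) := by
    rw [Int.card_Ioc]
    have h4 : (N : ℤ) ≤ ((p0 - (pq.1 - 1)).toNat : ℤ) := by
      rw [Int.toNat_of_nonneg (by omega)]; omega
    exact_mod_cast h4
  rw [nsmul_eq_mul] at h1
  have hMN : M + Kc ≤ (N : ℝ) * δ := by
    rw [div_le_iff₀ hδ] at hN
    linarith
  have h5 : M + Kc ≤ ((Finset.Ioc (pq.1 - 1) p0).card : ℝ) * δ :=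
    hMN.trans (mul_le_mul_of_nonneg_right hcard hδ.le)
  linarith

lemma eventually_sum_ge_atTop (f : ℤ → ℝ) (Kc δ : ℝ) (hδ : 0 < δ)
    (hlb : ∀ p q : ℤ, -Kc ≤ ∑ i ∈ Finset.Ioc p q, f i)
    (q0 : ℤ) (hq0 : ∀ i, q0 ≤ i → δ ≤ f i) (M : ℝ) :
    ∀ᶠ pq : ℤ × ℤ in Filter.atBot ×ˢ Filter.atTop, M ≤ ∑ i ∈ Finset.Icc pq.1 pq.2, f i := by
  obtain ⟨N, hN⟩ := exists_nat_ge ((M + Kc) / δ)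
  filter_upwards [Filter.Eventually.prod_mk (Filter.eventually_le_atBot q0)
    (Filter.eventually_ge_atTop (q0 + N))] with pq hpq
  obtain ⟨hp, hq⟩ := hpq
  rw [Icc_eq_Ioc_pred, sum_Ioc_split f (by omega : pq.1 - 1 ≤ q0) (by omega : q0 ≤ pq.2)]
  have h1 : (Finset.Ioc q0 pq.2).card • δ ≤ ∑ i ∈ Finset.Ioc q0 pq.2, f i :=
    Finset.card_nsmul_le_sum _ _ _ (fun i hi => hq0 i (Finset.mem_Ioc.1 hi).1.le)
  have h2 := hlb (pq.1 - 1) q0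
  have hcard : (N : ℝ) ≤ ((Finset.Ioc q0 pq.2).card : ℝ) := by
    rw [Int.card_Ioc]
    have h4 : (N : ℤ) ≤ ((pq.2 - q0).toNat : ℤ) := by
      rw [Int.toNat_of_nonneg (by omega)]; omega
    exact_mod_cast h4
  rw [nsmul_eq_mul] at h1
  have hMN : M + Kc ≤ (N : ℝ) * δ := by
    rw [div_le_iff₀ hδ] at hN
    linarith
  have h5 : M + Kc ≤ ((Finset.Ioc q0 pq.2).card : ℝ) * δ :=
    hMN.trans (mul_le_mul_of_nonneg_right hcard hδ.le)
  linarith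

lemma exists_lip {n r : ℕ} {s : (B0 n r → ℝ) → ℝ} (hsm : ContDiff ℝ 2 s)
    {K : Set (B0 n r → ℝ)} (hKc : Convex ℝ K) (hKcp : IsCompact K) :
    ∃ L : NNReal, LipschitzOnWith L s K := by
  have hcont : Continuous (fderiv ℝ s) := hsm.continuous_fderiv (by norm_num)
  obtain ⟨C, hC⟩ := hKcp.exists_bound_of_continuousOn hcont.continuousOn
  refine ⟨Real.toNNReal C, Convex.lipschitzOnWith_of_nnnorm_fderiv_le
    (fun x _ => (hsm.differentiable (by norm_num)).differentiableAt) (fun x hx => ?_) hKc⟩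
  have h1 := hC x hx
  rw [← NNReal.coe_le_coe, coe_nnnorm, Real.coe_toNNReal']
  exact h1.trans (le_max_left _ _)

end Statement7Aux


/- STATEMENT 7: a 1-monotone element of `Γ̂_1(v,w)` with `J_1(u) < ∞` is periodic or
heteroclinic between an ordered pair of members of `M_0`. -/
open Filter in
/-- a 1-monotone element of `Γ̂_1(v,w)` with `J_1(u) < ∞` is periodic or
heteroclinic between an ordered pair of members of `M_0`. -/
theorem statement_7 (n r : ℕ) (s : (B0 (n + 2) (r + 1) → ℝ) → ℝ)
    (hs : IsPotential (n + 2) (r + 1) s) (v w : Lat (n + 2) → ℝ)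
    (hv : v ∈ M0 s) (hw : w ∈ M0 s) (hvw : ∀ i, v i < w i)
    (u : Lat (n + 2) → ℝ) (hu : u ∈ Gamma1hat v w) (hfin : J1 s u < ⊤)
    (hmono : ∀ i : Lat (n + 2), u i ≤ u (i + latE 0)) :
    u ∈ M0 s ∨ ∃ φ ψ : Lat (n + 2) → ℝ, φ ∈ M0 s ∧ ψ ∈ M0 s ∧ v ≤ φ ∧
      (∀ i, φ i < ψ i) ∧ ψ ≤ w ∧ u ∈ Gamma1 φ ψ := by
  classical
  obtain ⟨hper, huv, huw⟩ := hu
  obtain ⟨hperv, hJv⟩ := hv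
  obtain ⟨hperw, hJw⟩ := hw
  set a : ℤ → ℝ := fun i => u (latT i) with ha
  -- the sequence `a` is monotone
  have hmonoa : Monotone a := by
    apply monotone_int_of_le_succ
    intro i
    have h2 : latT i + latE 0 = (latT (i + 1) : Lat (n + 2)) := by
      funext k
      by_cases hk : (k : ℕ) = 0 <;> simp [latT, latE, hk]
    have h3 := hmono (latT i)
    rw [h2] at h3
    exact h3
  set v0 : ℝ := v 0 with hv0
  set w0 : ℝ := w 0 with hw0
  have hvc : ∀ j, v j = v0 := fun j => hperv.eq_zero j
  have hwc : ∀ j, w j = w0 := fun j => hperw.eq_zero j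
  have hva : ∀ i, v0 ≤ a i := fun i => by
    rw [← hvc (latT i)]; exact huv (latT i)
  have haw : ∀ i, a i ≤ w0 := fun i => by
    rw [← hwc (latT i)]; exact huw (latT i)
  have hv0w0 : v0 < w0 := by rw [hv0, hw0]; exact hvw 0
  have hbddA : BddAbove (Set.range a) := ⟨w0, by rintro x ⟨i, rfl⟩; exact haw i⟩
  have hbddB : BddBelow (Set.range a) := ⟨v0, by rintro x ⟨i, rfl⟩; exact hva i⟩
  set α : ℝ := ⨅ i, a i with hαdef
  set β : ℝ := ⨆ i, a i with hβdef
  have hato : Tendsto a atBot (nhds α) := tendsto_atBot_ciInf hmonoa hbddB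
  have hbto : Tendsto a atTop (nhds β) := tendsto_atTop_ciSup hmonoa hbddA
  have hαa : ∀ i, α ≤ a i := fun i => ciInf_le hbddB i
  have haβ : ∀ i, a i ≤ β := fun i => le_ciSup hbddA i
  have hv0α : v0 ≤ α := le_ciInf hva
  have hβw0 : β ≤ w0 := ciSup_le haw
  have hrep : ∀ j, u j = a (j (coord0 n)) := fun j => hper.rep j
  -- window representation of the local potentials
  have hSpotWin : ∀ i : ℤ, Spot s (latT i) u
      = s (fun k : B0 (n + 2) (r + 1) => a (i + k.1 (coord0 n))) := by
    intro i
    unfold Spot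
    congr 1
    funext k
    rw [hper.rep (latT i + k.1)]
    have hco : ((latT i : Lat (n + 2)) + k.1) (coord0 n) = i + k.1 (coord0 n) := by
      show (latT i : Lat (n + 2)) (coord0 n) + k.1 (coord0 n) = i + k.1 (coord0 n)
      simp [latT, coord0]
    rw [hco, ha]
  -- Lipschitz constant on the cube
  obtain ⟨L, hLip⟩ := exists_lip (K := Set.univ.pi
      (fun _ : B0 (n + 2) (r + 1) => Set.Icc v0 w0)) hs.smooth
    (convex_pi (fun _ _ => convex_Icc _ _)) (isCompact_univ_pi (fun _ => isCompact_Icc))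
  have hklb : ∀ k : B0 (n + 2) (r + 1),
      -((r : ℤ) + 1) ≤ k.1 (coord0 n) ∧ k.1 (coord0 n) ≤ (r : ℤ) + 1 := by
    intro k
    have hmem := B0.coord_mem k (coord0 n)
    rw [Finset.mem_Icc] at hmem
    push_cast at hmem
    omega
  -- per-site lower bound
  have hsite : ∀ i : ℤ,
      -((L : ℝ) * (a (i + ((r : ℤ) + 1)) - a (i - ((r : ℤ) + 1)))) ≤ J1i s i u := by
    intro i
    have hx : (fun k : B0 (n + 2) (r + 1) => a (i + k.1 (coord0 n)))
        ∈ Set.univ.pi (fun _ : B0 (n + 2) (r + 1) => Set.Icc v0 w0) := by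
      rw [Set.mem_univ_pi]; intro k; exact ⟨hva _, haw _⟩
    have hy : (fun _ : B0 (n + 2) (r + 1) => a i)
        ∈ Set.univ.pi (fun _ : B0 (n + 2) (r + 1) => Set.Icc v0 w0) := by
      rw [Set.mem_univ_pi]; intro k; exact ⟨hva _, haw _⟩
    have hd := hLip.dist_le_mul _ hx _ hy
    have hV : dist (fun k : B0 (n + 2) (r + 1) => a (i + k.1 (coord0 n)))
        (fun _ => a i) ≤ a (i + ((r : ℤ) + 1)) - a (i - ((r : ℤ) + 1)) := by
      have h0 : (0 : ℝ) ≤ a (i + ((r : ℤ) + 1)) - a (i - ((r : ℤ) + 1)) :=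
        sub_nonneg.2 (hmonoa (by omega))
      rw [dist_pi_le_iff h0]
      intro k
      have hk := hklb k
      rw [Real.dist_eq, abs_sub_le_iff]
      constructor
      · have h1 : a (i + k.1 (coord0 n)) ≤ a (i + ((r : ℤ) + 1)) := hmonoa (by omega)
        have h2 : a (i - ((r : ℤ) + 1)) ≤ a i := hmonoa (by omega)
        linarith
      · have h1 : a i ≤ a (i + ((r : ℤ) + 1)) := hmonoa (by omega)
        have h2 : a (i - ((r : ℤ) + 1)) ≤ a (i + k.1 (coord0 n)) := hmonoa (by omega)
        linarith
    have hd2 := hd.trans (mul_le_mul_of_nonneg_left hV L.2)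
    rw [Real.dist_eq] at hd2
    have habs := abs_sub_le_iff.1 hd2
    have hc := c0_le_const hs (a i)
    show -((L : ℝ) * (a (i + ((r : ℤ) + 1)) - a (i - ((r : ℤ) + 1))))
      ≤ Spot s (latT i) u - c0 s
    rw [hSpotWin i]
    linarith [habs.1, habs.2]
  -- uniform lower bound for sums over intervals
  have hsum_lb : ∀ p q : ℤ,
      -((L : ℝ) * (2 * (((r : ℤ) + 1 : ℤ) : ℝ) * (w0 - v0)))
        ≤ ∑ i ∈ Finset.Ioc p q, J1i s i u := by
    intro p q
    have h1 : ∑ i ∈ Finset.Ioc p q,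
        (-((L : ℝ) * (a (i + ((r : ℤ) + 1)) - a (i - ((r : ℤ) + 1)))))
        ≤ ∑ i ∈ Finset.Ioc p q, J1i s i u :=
      Finset.sum_le_sum (fun i _ => hsite i)
    have h2 : ∑ i ∈ Finset.Ioc p q, (a (i + ((r : ℤ) + 1)) - a (i - ((r : ℤ) + 1)))
        ≤ 2 * (((r : ℤ) + 1 : ℤ) : ℝ) * (w0 - v0) :=
      sum_V_le hmonoa hva haw ((r : ℤ) + 1) (by omega) p q
    have h3 : ∑ i ∈ Finset.Ioc p q,
        (-((L : ℝ) * (a (i + ((r : ℤ) + 1)) - a (i - ((r : ℤ) + 1)))))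
        = -((L : ℝ) * ∑ i ∈ Finset.Ioc p q,
            (a (i + ((r : ℤ) + 1)) - a (i - ((r : ℤ) + 1)))) := by
      rw [Finset.mul_sum, ← Finset.sum_neg_distrib]
    have h4 : (L : ℝ) * (∑ i ∈ Finset.Ioc p q,
        (a (i + ((r : ℤ) + 1)) - a (i - ((r : ℤ) + 1))))
        ≤ (L : ℝ) * (2 * (((r : ℤ) + 1 : ℤ) : ℝ) * (w0 - v0)) :=
      mul_le_mul_of_nonneg_left h2 L.2
    rw [h3] at h1
    linarith
  -- liminf lower bound machinery
  have hJ1top : ∀ M : ℝ,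
      (∀ᶠ pq : ℤ × ℤ in atBot ×ˢ atTop, M ≤ ∑ i ∈ Finset.Icc pq.1 pq.2, J1i s i u) →
      (M : EReal) ≤ J1 s u := by
    intro M hM
    unfold J1
    rw [Filter.liminf_eq]
    apply le_sSup
    show ∀ᶠ pq : ℤ × ℤ in atBot ×ˢ atTop, (M : EReal) ≤ ((J1pq s pq.1 pq.2 u : ℝ) : EReal)
    refine hM.mono (fun pq h => ?_)
    exact EReal.coe_le_coe_iff.2 h
  -- limits of the site energies
  have hlim_bot : Tendsto (fun i : ℤ => J1i s i u) atBot
      (nhds (s (fun _ : B0 (n + 2) (r + 1) => α) - c0 s)) := by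
    have hwin : Tendsto (fun i : ℤ => (fun k : B0 (n + 2) (r + 1) => a (i + k.1 (coord0 n))))
        atBot (nhds (fun _ => α)) := by
      rw [tendsto_pi_nhds]
      intro k
      exact hato.comp (tendsto_atBot_add_const_right atBot (k.1 (coord0 n)) tendsto_id)
    have hc := ((hs.smooth.continuous.tendsto (fun _ => α)).comp hwin).sub_const (c0 s)
    refine hc.congr fun i => ?_
    have hJ : J1i s i u = s (fun k : B0 (n + 2) (r + 1) => a (i + k.1 (coord0 n))) - c0 s := by
      rw [← hSpotWin i]; rfl
    rw [hJ]
    rfl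
  have hlim_top : Tendsto (fun i : ℤ => J1i s i u) atTop
      (nhds (s (fun _ : B0 (n + 2) (r + 1) => β) - c0 s)) := by
    have hwin : Tendsto (fun i : ℤ => (fun k : B0 (n + 2) (r + 1) => a (i + k.1 (coord0 n))))
        atTop (nhds (fun _ => β)) := by
      rw [tendsto_pi_nhds]
      intro k
      exact hbto.comp (tendsto_atTop_add_const_right atTop (k.1 (coord0 n)) tendsto_id)
    have hc := ((hs.smooth.continuous.tendsto (fun _ => β)).comp hwin).sub_const (c0 s)
    refine hc.congr fun i => ?_
    have hJ : J1i s i u = s (fun k : B0 (n + 2) (r + 1) => a (i + k.1 (coord0 n))) - c0 s := by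
      rw [← hSpotWin i]; rfl
    rw [hJ]
    rfl
  -- the limits are minimizers
  have hαmin : s (fun _ : B0 (n + 2) (r + 1) => α) = c0 s := by
    by_contra hne
    have hδ : 0 < (s (fun _ : B0 (n + 2) (r + 1) => α) - c0 s) / 2 := by
      have h1 := c0_le_const hs α
      have h2 : c0 s < s (fun _ : B0 (n + 2) (r + 1) => α) :=
        lt_of_le_of_ne h1 (fun h => hne h.symm)
      linarith
    have hev := hlim_bot.eventually (eventually_ge_nhds (by linarith :
      (s (fun _ : B0 (n + 2) (r + 1) => α) - c0 s) / 2
        < s (fun _ : B0 (n + 2) (r + 1) => α) - c0 s))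
    obtain ⟨p0, hp0⟩ := Filter.eventually_atBot.1 hev
    obtain ⟨x, hx, -⟩ := EReal.lt_iff_exists_real_btwn.1 hfin
    exact absurd (hJ1top x (eventually_sum_ge_atBot _ _ _ hδ hsum_lb p0 hp0 x)) (not_le.2 hx)
  have hβmin : s (fun _ : B0 (n + 2) (r + 1) => β) = c0 s := by
    by_contra hne
    have hδ : 0 < (s (fun _ : B0 (n + 2) (r + 1) => β) - c0 s) / 2 := by
      have h1 := c0_le_const hs β
      have h2 : c0 s < s (fun _ : B0 (n + 2) (r + 1) => β) :=
        lt_of_le_of_ne h1 (fun h => hne h.symm)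
      linarith
    have hev := hlim_top.eventually (eventually_ge_nhds (by linarith :
      (s (fun _ : B0 (n + 2) (r + 1) => β) - c0 s) / 2
        < s (fun _ : B0 (n + 2) (r + 1) => β) - c0 s))
    obtain ⟨q0, hq0⟩ := Filter.eventually_atTop.1 hev
    obtain ⟨x, hx, -⟩ := EReal.lt_iff_exists_real_btwn.1 hfin
    exact absurd (hJ1top x (eventually_sum_ge_atTop _ _ _ hδ hsum_lb q0 hq0 x)) (not_le.2 hx)
  -- conclusion
  have hαβ : α ≤ β := (hαa 0).trans (haβ 0)
  rcases eq_or_lt_of_le hαβ with heq | hlt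
  · left
    have hconst : ∀ j, u j = α := by
      intro j
      rw [hrep j]
      refine le_antisymm ?_ (hαa _)
      rw [heq]
      exact haβ _
    refine ⟨?_, ?_⟩
    · intro i k
      rw [hconst, hconst]
    · have hJ0 : J0 s u = s (fun _ : B0 (n + 2) (r + 1) => α) := by
        unfold J0 Spot
        congr 1
        funext k
        rw [hconst]
      rw [hJ0, hαmin]
  · right
    refine ⟨fun _ => α, fun _ => β, ⟨fullyPeriodic_const α, hαmin⟩,
      ⟨fullyPeriodic_const β, hβmin⟩, ?_, fun i => hlt, ?_, ⟨⟨hper, ?_, ?_⟩, ?_, ?_⟩⟩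
    · intro j; rw [hvc j]; exact hv0α
    · intro j; rw [hwc j]; exact hβw0
    · intro j
      show α ≤ u j
      rw [hrep j]; exact hαa _
    · intro j
      show u j ≤ β
      rw [hrep j]; exact haβ _
    · have h1 : Tendsto (fun i : ℤ => a i - α) atBot (nhds 0) := by
        simpa using hato.sub_const α
      have h2 := h1.abs
      simp only [abs_zero] at h2
      refine h2.congr fun i => ?_
      rw [ha]
    · have h1 : Tendsto (fun i : ℤ => a i - β) atTop (nhds 0) := by
        simpa using hbto.sub_const β
      have h2 := h1.abs
      simp only [abs_zero] at h2
      refine h2.congr fun i => ?_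
      rw [ha]


end FK
end

section
/- Let v, w ∈ M_0 with v < w, let Y ⊆ Γ̂_1(v, w) be nonempty, c(Y) = inf_{u ∈ Y} J_1(u), and let (u_k) be a sequence in Y with J_1(u_k) → c(Y). Then there exist U ∈ Γ̂_1(v, w) and a subsequence of (u_k) converging pointwise to U. If moreover c(Y) < ∞ and K_1 ≥ 0 satisfies J_{1;p,q}(u) ≥ −K_1 for every u ∈ Γ̂_1(v, w) and all integers p ≤ q, then −K_1 ≤ J_1(U) ≤ c(Y) + 1 + 2K_1. -/
open scoped BigOperators

namespace FK

section Aux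

open Filter

private lemma continuous_J1pq' {n r : ℕ} (s : (B0 n r → ℝ) → ℝ) (hs : Continuous s) (p q : ℤ) :
    Continuous (J1pq s p q) := by
  unfold J1pq J1i Spot
  exact continuous_finset_sum _ fun i _ =>
    (hs.comp (continuous_pi fun k => continuous_apply _)).sub continuous_const

private lemma J1pq_split' {n r : ℕ} (s : (B0 n r → ℝ) → ℝ) (z : Lat n → ℝ) (p' p q q' : ℤ)
    (h1 : p' ≤ p) (h2 : p ≤ q) (h3 : q ≤ q') :
    J1pq s p' q' z = J1pq s p' (p-1) z + J1pq s p q z + J1pq s (q+1) q' z := by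
  unfold J1pq
  have e : ∀ a b : ℤ, Finset.Icc a b = Finset.Ioc (a-1) b := by
    intro a b; ext x; simp only [Finset.mem_Icc, Finset.mem_Ioc]; omega
  have d : ∀ a b c : ℤ, Disjoint (Finset.Ioc a b) (Finset.Ioc b c) := by
    intro a b c; rw [Finset.disjoint_left]
    intro x hx hx'; simp only [Finset.mem_Ioc] at hx hx'; omega
  rw [e p' q', e p' (p-1), e p q, e (q+1) q', show q+1-1 = q by omega,
    ← Finset.Ioc_union_Ioc_eq_Ioc (show (p'-1 : ℤ) ≤ q by omega) (show q ≤ q' by omega),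
    Finset.sum_union (d _ _ _),
    ← Finset.Ioc_union_Ioc_eq_Ioc (show (p'-1 : ℤ) ≤ p-1 by omega) (show (p-1 : ℤ) ≤ q by omega),
    Finset.sum_union (d _ _ _)]

private lemma J1pq_lb' {n r : ℕ} (s : (B0 n r → ℝ) → ℝ) (z : Lat n → ℝ) (K1 : ℝ)
    (hK1 : 0 ≤ K1) (hK : ∀ p q : ℤ, p ≤ q → -K1 ≤ J1pq s p q z) :
    ∀ p q : ℤ, -K1 ≤ J1pq s p q z := by
  intro p q
  by_cases h : p ≤ q
  · exact hK p q h
  · simp only [J1pq, Finset.Icc_eq_empty h, Finset.sum_empty]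
    linarith

private lemma J1_lb' {n r : ℕ} (s : (B0 n r → ℝ) → ℝ) (z : Lat n → ℝ) (K1 : ℝ)
    (hK1 : 0 ≤ K1) (hK : ∀ p q : ℤ, p ≤ q → -K1 ≤ J1pq s p q z) :
    ((-K1 : ℝ) : EReal) ≤ J1 s z := by
  apply Filter.le_liminf_of_le (by isBoundedDefault)
  exact Filter.Eventually.of_forall fun pq =>
    EReal.coe_le_coe_iff.mpr (J1pq_lb' s z K1 hK1 hK pq.1 pq.2)

private lemma J1pq_le_J1' {n r : ℕ} (s : (B0 n r → ℝ) → ℝ) (z : Lat n → ℝ) (K1 : ℝ)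
    (hK1 : 0 ≤ K1) (hK : ∀ p q : ℤ, p ≤ q → -K1 ≤ J1pq s p q z)
    (p q : ℤ) (hpq : p ≤ q) :
    ((J1pq s p q z - 2 * K1 : ℝ) : EReal) ≤ J1 s z := by
  apply Filter.le_liminf_of_le (by isBoundedDefault)
  filter_upwards [Filter.prod_mem_prod (Filter.Iic_mem_atBot p) (Filter.Ici_mem_atTop q)]
    with pq hpq'
  obtain ⟨h1, h3⟩ := hpq'
  rw [EReal.coe_le_coe_iff, J1pq_split' s z pq.1 p q pq.2 h1 hpq h3]
  have b1 := J1pq_lb' s z K1 hK1 hK pq.1 (p-1)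
  have b2 := J1pq_lb' s z K1 hK1 hK (q+1) pq.2
  linarith

end Aux

/-- compactness of minimizing sequences for `J_1`. -/
theorem statement_8 (n r : ℕ) (s : (B0 (n + 2) (r + 1) → ℝ) → ℝ)
    (hs : IsPotential (n + 2) (r + 1) s) (v w : Lat (n + 2) → ℝ)
    (hv : v ∈ M0 s) (hw : w ∈ M0 s) (hvw : ∀ i, v i < w i)
    (Y : Set (Lat (n + 2) → ℝ)) (hY : Y ⊆ Gamma1hat v w) (hYne : Y.Nonempty)
    (u : ℕ → Lat (n + 2) → ℝ) (hu : ∀ k, u k ∈ Y)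
    (hmin : Filter.Tendsto (fun k => J1 s (u k)) Filter.atTop (nhds (sInf (J1 s '' Y)))) :
    ∃ U ∈ Gamma1hat v w, ∃ φ : ℕ → ℕ, StrictMono φ ∧
      (∀ i, Filter.Tendsto (fun k => u (φ k) i) Filter.atTop (nhds (U i))) ∧
      (sInf (J1 s '' Y) < ⊤ → ∀ K1 : ℝ, 0 ≤ K1 →
        (∀ z ∈ Gamma1hat v w, ∀ p q : ℤ, p ≤ q → -K1 ≤ J1pq s p q z) →
        ((-K1 : ℝ) : EReal) ≤ J1 s U ∧
          J1 s U ≤ sInf (J1 s '' Y) + ((1 + 2 * K1 : ℝ) : EReal)) := by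
  classical
  -- Compactness: extract a pointwise convergent subsequence.
  have hc : IsCompact (Set.pi Set.univ fun i => Set.Icc (v i) (w i)) :=
    isCompact_univ_pi fun i => isCompact_Icc
  obtain ⟨U, hUmem, φ, hφ, ht⟩ := hc.tendsto_subseq (x := u) (fun k => by
    simp only [Set.mem_univ_pi]
    exact fun i => ⟨(hY (hu k)).2.1 i, (hY (hu k)).2.2 i⟩)
  have hpt : ∀ i, Filter.Tendsto (fun k => u (φ k) i) Filter.atTop (nhds (U i)) :=
    fun i => ((continuous_apply i).tendsto U).comp ht
  -- U ∈ Γ̂₁(v,w)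
  have hUΓ : U ∈ Gamma1hat v w := by
    refine ⟨?_, ?_, ?_⟩
    · intro i k hk
      have h1 := hpt (i + latE (k : ℕ))
      have h2 : (fun m => u (φ m) (i + latE (k : ℕ))) = fun m => u (φ m) i :=
        funext fun m => (hY (hu (φ m))).1 i k hk
      rw [h2] at h1
      exact tendsto_nhds_unique h1 (hpt i)
    · intro i
      exact ge_of_tendsto' (hpt i) fun m => (hY (hu (φ m))).2.1 i
    · intro i
      exact le_of_tendsto' (hpt i) fun m => (hY (hu (φ m))).2.2 i
  refine ⟨U, hUΓ, φ, hφ, hpt, ?_⟩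
  intro hctop K1 hK1 hK
  set c := sInf (J1 s '' Y) with hc_def
  -- lower bound on c
  have hclb : ((-K1 : ℝ) : EReal) ≤ c := by
    apply le_sInf
    rintro x ⟨z, hz, rfl⟩
    exact J1_lb' s z K1 hK1 (fun p q hpq => hK z (hY hz) p q hpq)
  have hcbot : c ≠ ⊥ := ((lt_of_lt_of_le (EReal.bot_lt_coe _) hclb)).ne'
  have hctop' : c ≠ ⊤ := hctop.ne
  set t : ℝ := c.toReal with ht_def
  have hct : c = ((t : ℝ) : EReal) := (EReal.coe_toReal hctop' hcbot).symm
  constructor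
  · exact J1_lb' s U K1 hK1 (fun p q hpq => hK U hUΓ p q hpq)
  -- upper bound
  have hmin' : Filter.Tendsto (fun m => J1 s (u (φ m))) Filter.atTop (nhds c) :=
    hmin.comp (hφ.tendsto_atTop)
  have hev : ∀ᶠ m in Filter.atTop, J1 s (u (φ m)) < ((t + 1 : ℝ) : EReal) := by
    apply hmin'.eventually_lt_const
    rw [hct]
    exact_mod_cast EReal.coe_lt_coe_iff.mpr (by linarith : t < t + 1)
  have claim : ∀ p q : ℤ, p ≤ q → J1pq s p q U ≤ t + 1 + 2 * K1 := by
    intro p q hpq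
    have hlim : Filter.Tendsto (fun m => J1pq s p q (u (φ m))) Filter.atTop
        (nhds (J1pq s p q U)) :=
      ((continuous_J1pq' s hs.smooth.continuous p q).tendsto U).comp ht
    apply le_of_tendsto hlim
    filter_upwards [hev] with m hm
    have h1 : ((J1pq s p q (u (φ m)) - 2 * K1 : ℝ) : EReal) ≤ J1 s (u (φ m)) :=
      J1pq_le_J1' s (u (φ m)) K1 hK1 (fun p' q' hpq' => hK _ (hY (hu (φ m))) p' q' hpq')
        p q hpq
    have h2 : ((J1pq s p q (u (φ m)) - 2 * K1 : ℝ) : EReal) < ((t + 1 : ℝ) : EReal) :=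
      lt_of_le_of_lt h1 hm
    have h3 := EReal.coe_lt_coe_iff.mp h2
    linarith
  have hub : J1 s U ≤ ((t + 1 + 2 * K1 : ℝ) : EReal) := by
    refine Filter.liminf_le_of_frequently_le ?_ (by isBoundedDefault)
    apply Filter.Eventually.frequently
    filter_upwards [Filter.prod_mem_prod (Filter.Iic_mem_atBot (0 : ℤ))
      (Filter.Ici_mem_atTop (0 : ℤ))] with pq hpq'
    exact EReal.coe_le_coe_iff.mpr (claim pq.1 pq.2 (le_trans hpq'.1 hpq'.2))
  calc J1 s U ≤ ((t + 1 + 2 * K1 : ℝ) : EReal) := hub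
    _ = c + ((1 + 2 * K1 : ℝ) : EReal) := by
        rw [hct, ← EReal.coe_add]
        norm_cast
        ring

end FK
end
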